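/- arXiv:2003.00560 — 8 statements merged into one kernel-verified Lean document; each statement's English description precedes it below -/
import Mathlib

section
/- For every real x ≥ -1/2 and every γ ∈ (0,1), one has (1+x)^γ ≤ 1 + γx - (γ(1-γ)/2)x^2 + 4γ|x|^3. -/
/-!
Write `g(t) = 1 + γt - γ(1-γ)t²/2 + ct³ - (1+t)^γ`. Then `g(0) = g'(0) = 0` and
`g''(t) = γ(1-γ)((1+t)^(γ-2) - 1) + 6ct`. For `-1 < t ≤ 0` this is nonnegative already with
`c = 0`, since `(1+t)^(γ-2) ≥ 1`; for `t ≥ 0` the bound `(1+t)^(γ-2) ≥ (1+t)^(-2) ≥ 1 - 2t` makes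
it nonnegative with `c = 4γ`. In either case `g` is convex, so it lies above its tangent at `0`,
which is the zero line.
-/

open Real Set

theorem ConvexOn.add_mul_sub_le_of_hasDerivAt {S : Set ℝ} {f : ℝ → ℝ} {a x f' : ℝ}
    (hf : ConvexOn ℝ S f) (ha : a ∈ S) (hx : x ∈ S) (hf' : HasDerivAt f f' a) :
    f a + f' * (x - a) ≤ f x := by
  rcases lt_trichotomy a x with hax | rfl | hxa
  · have := hf.le_slope_of_hasDerivAt ha hx hax hf'
    rw [slope_def_field, le_div_iff₀ (sub_pos.2 hax)] at this
    linarith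
  · simp
  · have := hf.slope_le_of_hasDerivAt hx ha hxa hf'
    rw [slope_def_field, div_le_iff₀ (sub_pos.2 hxa)] at this
    linarith

theorem one_sub_two_mul_le_rpow_one_add {t p : ℝ} (ht : 0 ≤ t) (hp : -2 ≤ p) :
    1 - 2 * t ≤ (1 + t) ^ p := by
  have h1t : 0 < 1 + t := by linarith
  calc 1 - 2 * t ≤ ((1 + t) ^ 2)⁻¹ := by
        rw [← one_div, le_div_iff₀ (by positivity)]
        nlinarith [mul_nonneg (mul_nonneg ht ht) ht]
    _ = (1 + t) ^ (-2 : ℝ) := by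
        rw [rpow_neg h1t.le, rpow_two]
    _ ≤ (1 + t) ^ p := rpow_le_rpow_of_exponent_le (by linarith) hp

noncomputable def taylorGap (γ c t : ℝ) : ℝ :=
  1 + γ * t - γ * (1 - γ) / 2 * t ^ 2 + c * t ^ 3 - (1 + t) ^ γ

section taylorGap

variable {γ c t : ℝ}

theorem hasDerivAt_taylorGap (ht : 0 < 1 + t) :
    HasDerivAt (taylorGap γ c)
      (γ - γ * (1 - γ) * t + 3 * c * t ^ 2 - γ * (1 + t) ^ (γ - 1)) t := by
  have hrpow := ((hasDerivAt_id' t).const_add 1).rpow_const (p := γ) (Or.inl ht.ne')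
  have h := (((((hasDerivAt_id' t).const_mul γ).const_add 1).sub
    ((hasDerivAt_pow 2 t).const_mul (γ * (1 - γ) / 2))).add
    ((hasDerivAt_pow 3 t).const_mul c)).sub hrpow
  refine h.congr_deriv ?_
  push_cast
  ring

theorem hasDerivAt_deriv_taylorGap (ht : 0 < 1 + t) :
    HasDerivAt (fun s ↦ γ - γ * (1 - γ) * s + 3 * c * s ^ 2 - γ * (1 + s) ^ (γ - 1))
      (γ * (1 - γ) * ((1 + t) ^ (γ - 2) - 1) + 6 * c * t) t := by
  have hrpow := ((hasDerivAt_id' t).const_add 1).rpow_const (p := γ - 1) (Or.inl ht.ne')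
  have h := ((((hasDerivAt_id' t).const_mul (γ * (1 - γ))).const_sub γ).add
    ((hasDerivAt_pow 2 t).const_mul (3 * c))).sub (hrpow.const_mul γ)
  refine h.congr_deriv ?_
  rw [show γ - 1 - 1 = γ - 2 by ring]
  push_cast
  ring

theorem convexOn_taylorGap {S : Set ℝ} (hS : Convex ℝ S) (hS1 : S ⊆ Ioi (-1))
    (h'' : ∀ t ∈ S, 0 ≤ γ * (1 - γ) * ((1 + t) ^ (γ - 2) - 1) + 6 * c * t) :
    ConvexOn ℝ S (taylorGap γ c) := by
  have hpos : ∀ t ∈ S, 0 < 1 + t := fun t ht ↦ by linarith [mem_Ioi.1 (hS1 ht)]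
  refine convexOn_of_hasDerivWithinAt2_nonneg hS
    (fun t ht ↦ (hasDerivAt_taylorGap (hpos t ht)).continuousAt.continuousWithinAt)
    (fun t ht ↦ (hasDerivAt_taylorGap (hpos t (interior_subset ht))).hasDerivWithinAt)
    (fun t ht ↦ (hasDerivAt_deriv_taylorGap (hpos t (interior_subset ht))).hasDerivWithinAt)
    (fun t ht ↦ h'' t (interior_subset ht))

theorem convexOn_taylorGap_Ioc (hγ0 : 0 ≤ γ) (hγ1 : γ ≤ 1) :
    ConvexOn ℝ (Ioc (-1) 0) (taylorGap γ 0) := by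
  refine convexOn_taylorGap (convex_Ioc _ _) Ioc_subset_Ioi_self fun t ⟨ht1, ht0⟩ ↦ ?_
  have : 1 ≤ (1 + t) ^ (γ - 2) :=
    one_le_rpow_of_pos_of_le_one_of_nonpos (by linarith) (by linarith) (by linarith)
  have : 0 ≤ γ * (1 - γ) := mul_nonneg hγ0 (by linarith)
  nlinarith

theorem convexOn_taylorGap_Ici (hγ0 : 0 ≤ γ) (hγ1 : γ ≤ 1) :
    ConvexOn ℝ (Ici 0) (taylorGap γ (4 * γ)) := by
  refine convexOn_taylorGap (convex_Ici _) (Ici_subset_Ioi.2 (by norm_num)) fun t ht ↦ ?_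
  have : 1 - 2 * t ≤ (1 + t) ^ (γ - 2) := one_sub_two_mul_le_rpow_one_add ht (by linarith)
  have : 0 ≤ γ * (1 - γ) := mul_nonneg hγ0 (by linarith)
  nlinarith [mul_nonneg hγ0 (mem_Ici.1 ht)]

theorem taylorGap_nonneg_of_convexOn {S : Set ℝ} {x : ℝ} (hf : ConvexOn ℝ S (taylorGap γ c))
    (h0 : 0 ∈ S) (hx : x ∈ S) : 0 ≤ taylorGap γ c x := by
  have := hf.add_mul_sub_le_of_hasDerivAt h0 hx (hasDerivAt_taylorGap (by norm_num))
  simpa [taylorGap] using this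

end taylorGap

theorem rpow_one_add_le_taylor (x γ : ℝ) (hx : -(1/2) ≤ x) (hγ0 : 0 < γ) (hγ1 : γ < 1) :
    (1 + x) ^ γ ≤ 1 + γ * x - (γ * (1 - γ) / 2) * x^2 + 4 * γ * |x|^3 := by
  rcases le_total 0 x with hx0 | hx0
  · have hgap := taylorGap_nonneg_of_convexOn (convexOn_taylorGap_Ici hγ0.le hγ1.le)
      self_mem_Ici hx0
    rw [abs_of_nonneg hx0]
    unfold taylorGap at hgap
    linarith
  · have hgap := taylorGap_nonneg_of_convexOn (convexOn_taylorGap_Ioc hγ0.le hγ1.le)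
      (right_mem_Ioc.2 (by norm_num)) ⟨by linarith, hx0⟩
    have hcube : 0 ≤ 4 * γ * |x| ^ 3 := by positivity
    unfold taylorGap at hgap
    linarith
end

section
/- Let ξ be a random variable taking values in [0, ∞) with E[ξ]=1 and finite third moment. Then for all p ∈ (0, 1/2), log E[(1 + p(ξ-1))^{-1}] ≤ p^2 Var(ξ) + 8 p^3 E[|ξ-1|^3]. -/
/-!
With `X = p (ξ - 1) ≥ -1/2`, the Taylor expansion of `(1 + X)⁻¹` with its cubic remainder
gives `(1 + X)⁻¹ ≤ 1 - X + X² + 2|X|³`. Taking expectations, the linear term vanishes because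
`E X = 0`, so `E (1 + X)⁻¹ ≤ 1 + p² Var ξ + 2 p³ E|ξ - 1|³`, and `log t ≤ t - 1` finishes the
proof.
-/

open MeasureTheory

lemma one_sub_le_inv_one_add {x : ℝ} (hx : -1 < x) : 1 - x ≤ (1 + x)⁻¹ := by
  have hpos : 0 < 1 + x := by linarith
  rw [← one_div, le_div_iff₀ hpos]
  nlinarith [sq_nonneg x]

lemma inv_one_add_le_of_neg_half_le {x : ℝ} (hx : -(1 / 2) ≤ x) :
    (1 + x)⁻¹ ≤ 1 - x + x ^ 2 + 2 * |x| ^ 3 := by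
  have hpos : 0 < 1 + x := by linarith
  -- `(1 + x)⁻¹ = 1 - x + x² - x³ / (1 + x)`, and `1 + x ≥ 1/2` bounds the remainder.
  rw [inv_le_iff_one_le_mul₀ hpos]
  rcases abs_cases x with ⟨h, hx0⟩ | ⟨h, hx0⟩ <;> rw [h]
  · nlinarith [pow_nonneg hx0 3, pow_nonneg hx0 4]
  · nlinarith [pow_nonneg (neg_nonneg.mpr hx0.le) 3, pow_nonneg (neg_nonneg.mpr hx0.le) 4]

section

variable {Ω : Type*} [MeasurableSpace Ω] {μ : Measure Ω} {X : Ω → ℝ}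

lemma integrable_inv_one_add [IsFiniteMeasure μ] (hXm : AEMeasurable X μ)
    (hX : ∀ᵐ ω ∂μ, -(1 / 2) ≤ X ω) : Integrable (fun ω => (1 + X ω)⁻¹) μ := by
  refine Integrable.mono' (integrable_const 2)
    (aemeasurable_const.add hXm).inv.aestronglyMeasurable ?_
  filter_upwards [hX] with ω hω
  rw [Real.norm_eq_abs, abs_of_pos (inv_pos.mpr (by linarith)),
    inv_le_comm₀ (by linarith) two_pos]
  linarith

lemma one_le_integral_inv_one_add [IsProbabilityMeasure μ] (hX : ∀ᵐ ω ∂μ, -1 < X ω)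
    (hinv : Integrable (fun ω => (1 + X ω)⁻¹) μ) (hX1 : Integrable X μ)
    (hmean : ∫ ω, X ω ∂μ = 0) :
    1 ≤ ∫ ω, (1 + X ω)⁻¹ ∂μ :=
  calc 1 = ∫ ω, (1 - X ω) ∂μ := by
        rw [integral_sub (integrable_const 1) hX1, hmean]; simp
    _ ≤ ∫ ω, (1 + X ω)⁻¹ ∂μ :=
        integral_mono_ae ((integrable_const 1).sub hX1) hinv
          (hX.mono fun _ => one_sub_le_inv_one_add)

lemma integral_inv_one_add_le [IsProbabilityMeasure μ] (hX : ∀ᵐ ω ∂μ, -(1 / 2) ≤ X ω)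
    (hinv : Integrable (fun ω => (1 + X ω)⁻¹) μ) (hX1 : Integrable X μ)
    (hmean : ∫ ω, X ω ∂μ = 0) (hX2 : Integrable (fun ω => X ω ^ 2) μ)
    (hX3 : Integrable (fun ω => |X ω| ^ 3) μ) :
    ∫ ω, (1 + X ω)⁻¹ ∂μ ≤ 1 + ∫ ω, X ω ^ 2 ∂μ + 2 * ∫ ω, |X ω| ^ 3 ∂μ := by
  have hlin : Integrable (fun ω => 1 - X ω) μ := (integrable_const 1).sub hX1
  have hquad : Integrable (fun ω => 1 - X ω + X ω ^ 2) μ := hlin.add hX2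
  calc ∫ ω, (1 + X ω)⁻¹ ∂μ ≤ ∫ ω, (1 - X ω + X ω ^ 2 + 2 * |X ω| ^ 3) ∂μ :=
        integral_mono_ae hinv (hquad.add (hX3.const_mul 2))
          (hX.mono fun _ => inv_one_add_le_of_neg_half_le)
    _ = 1 + ∫ ω, X ω ^ 2 ∂μ + 2 * ∫ ω, |X ω| ^ 3 ∂μ := by
        rw [integral_add hquad (hX3.const_mul 2), integral_add hlin hX2,
          integral_sub (integrable_const 1) hX1, integral_const_mul, hmean]
        simp

end

theorem log_integral_inv_le_general
    {Ω : Type*} [MeasurableSpace Ω] (μ : Measure Ω) [IsProbabilityMeasure μ]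
    (ξ : Ω → ℝ)
    (hpos : ∀ᵐ ω ∂μ, 0 ≤ ξ ω)
    (hint : Integrable ξ μ) (hmean : ∫ ω, ξ ω ∂μ = 1)
    (h2 : Integrable (fun ω => (ξ ω - 1)^2) μ)
    (h3 : Integrable (fun ω => |ξ ω - 1|^3) μ)
    (p : ℝ) (hp0 : 0 < p) (hp1 : p < 1/2) :
    Real.log (∫ ω, (1 + p * (ξ ω - 1))⁻¹ ∂μ) ≤
      p^2 * (∫ ω, (ξ ω - 1)^2 ∂μ) + 8 * p^3 * (∫ ω, |ξ ω - 1|^3 ∂μ) := by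
  set X : Ω → ℝ := fun ω => p * (ξ ω - 1)
  have hX : ∀ᵐ ω ∂μ, -(1 / 2) ≤ X ω := hpos.mono fun ω hω => by simp only [X]; nlinarith
  have hX1 : Integrable X μ := (hint.sub (integrable_const 1)).const_mul p
  have hXmean : ∫ ω, X ω ∂μ = 0 := by
    simp only [X]
    rw [integral_const_mul, integral_sub hint (integrable_const 1), hmean]
    simp
  have hX2 : (fun ω => X ω ^ 2) = fun ω => p ^ 2 * (ξ ω - 1) ^ 2 := by
    funext ω; exact mul_pow p _ 2
  have hX3 : (fun ω => |X ω| ^ 3) = fun ω => p ^ 3 * |ξ ω - 1| ^ 3 := by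
    funext ω; rw [abs_mul, abs_of_pos hp0, mul_pow]
  have hinv := integrable_inv_one_add hX1.aemeasurable hX
  have hI := integral_inv_one_add_le hX hinv hX1 hXmean
    (hX2 ▸ h2.const_mul (p ^ 2)) (hX3 ▸ h3.const_mul (p ^ 3))
  rw [hX2, hX3, integral_const_mul, integral_const_mul] at hI
  have hM : 0 ≤ p ^ 3 * ∫ ω, |ξ ω - 1| ^ 3 ∂μ := by positivity
  calc Real.log (∫ ω, (1 + X ω)⁻¹ ∂μ) ≤ (∫ ω, (1 + X ω)⁻¹ ∂μ) - 1 :=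
        Real.log_le_sub_one_of_pos <| one_pos.trans_le <| one_le_integral_inv_one_add
          (hX.mono fun _ h => by linarith) hinv hX1 hXmean
    _ ≤ _ := by linarith

theorem log_integral_inv_le
    {Ω : Type*} [MeasurableSpace Ω] (μ : Measure Ω) [IsProbabilityMeasure μ]
    (ξ : Ω → ℝ) (hmeas : Measurable ξ)
    (hpos : ∀ᵐ ω ∂μ, 0 ≤ ξ ω)
    (hint : Integrable ξ μ) (hmean : ∫ ω, ξ ω ∂μ = 1)
    (h2 : Integrable (fun ω => (ξ ω - 1)^2) μ)
    (h3 : Integrable (fun ω => |ξ ω - 1|^3) μ)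
    (p : ℝ) (hp0 : 0 < p) (hp1 : p < 1/2) :
    Real.log (∫ ω, (1 + p * (ξ ω - 1))⁻¹ ∂μ) ≤
      p^2 * (∫ ω, (ξ ω - 1)^2 ∂μ) + 8 * p^3 * (∫ ω, |ξ ω - 1|^3 ∂μ) :=
  log_integral_inv_le_general μ ξ hpos hint hmean h2 h3 p hp0 hp1
end

section
/- Let ξ be a random variable taking values in [0,∞) with E[ξ]=1 and finite third moment. Then for all p ∈ (0,1/2), log E[(1 + p(ξ-1))^{-1} ξ] − log E[(1 + p(ξ-1))^{-1}] ≤ −p·Var(ξ) + C·p^2, where C = 4E[(ξ-1)^2 ξ] + Var(ξ) + 8·(1/2)·E[|ξ-1|^3] may be taken as any constant depending only on the law of ξ. -/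
open MeasureTheory

theorem log_ratio_tilted_le
    {Ω : Type*} [MeasurableSpace Ω] (μ : Measure Ω) [IsProbabilityMeasure μ]
    (ξ : Ω → ℝ) (hmeas : Measurable ξ)
    (hpos : ∀ᵐ ω ∂μ, 0 ≤ ξ ω)
    (hint : Integrable ξ μ) (hmean : ∫ ω, ξ ω ∂μ = 1)
    (h2 : Integrable (fun ω => (ξ ω - 1)^2) μ)
    (h3 : Integrable (fun ω => |ξ ω - 1|^3) μ)
    (h2x : Integrable (fun ω => (ξ ω - 1)^2 * ξ ω) μ)
    (p : ℝ) (hp0 : 0 < p) (hp1 : p < 1/2) :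
    Real.log (∫ ω, (1 + p * (ξ ω - 1))⁻¹ * ξ ω ∂μ) -
        Real.log (∫ ω, (1 + p * (ξ ω - 1))⁻¹ ∂μ) ≤
      -p * (∫ ω, (ξ ω - 1)^2 ∂μ) +
        (4 * (∫ ω, (ξ ω - 1)^2 * ξ ω ∂μ) + (∫ ω, (ξ ω - 1)^2 ∂μ) +
          8 * (1/2) * (∫ ω, |ξ ω - 1|^3 ∂μ)) * p^2 := by
  have hp2 : (0:ℝ) < 1 - p := by linarith
  -- a.e. bounds on D = 1 + p(ξ-1)
  have hD : ∀ᵐ ω ∂μ, 1 - p ≤ 1 + p * (ξ ω - 1) := by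
    filter_upwards [hpos] with ω h
    nlinarith
  have hDpos : ∀ᵐ ω ∂μ, 0 < 1 + p * (ξ ω - 1) :=
    hD.mono fun ω h => lt_of_lt_of_le hp2 h
  have hDinv : ∀ᵐ ω ∂μ, (1 + p * (ξ ω - 1))⁻¹ ≤ 2 := by
    filter_upwards [hD] with ω h
    have h2le : (2:ℝ)⁻¹ ≤ 1 + p * (ξ ω - 1) := by linarith
    have := inv_anti₀ (by norm_num : (0:ℝ) < 2⁻¹) h2le
    simpa using this
  -- measurability
  have hmD : Measurable fun ω => (1 + p * (ξ ω - 1))⁻¹ :=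
    (((hmeas.sub measurable_const).const_mul p).const_add 1).inv
  -- integrability
  have hX : Integrable (fun ω => ξ ω - 1) μ := hint.sub (integrable_const 1)
  have hg : Integrable (fun ω => (1 + p * (ξ ω - 1))⁻¹) μ := by
    refine (integrable_const (2:ℝ)).mono' hmD.aestronglyMeasurable ?_
    filter_upwards [hDpos, hDinv] with ω h1 h2'
    rw [Real.norm_eq_abs, abs_of_nonneg (inv_nonneg.2 h1.le)]
    exact h2'
  have hgx : Integrable (fun ω => (1 + p * (ξ ω - 1))⁻¹ * ξ ω) μ := by
    refine (hint.const_mul 2).mono' (hmD.mul hmeas).aestronglyMeasurable ?_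
    filter_upwards [hDpos, hDinv, hpos] with ω h1 h2' h3'
    rw [Real.norm_eq_abs, abs_of_nonneg (mul_nonneg (inv_nonneg.2 h1.le) h3')]
    exact mul_le_mul_of_nonneg_right h2' h3'
  have hX2g : Integrable (fun ω => (ξ ω - 1)^2 * (1 + p * (ξ ω - 1))⁻¹) μ := by
    refine (h2.const_mul 2).mono'
      (((hmeas.sub measurable_const).pow_const 2).mul hmD).aestronglyMeasurable ?_
    filter_upwards [hDpos, hDinv] with ω h1 h2'
    rw [Real.norm_eq_abs, abs_of_nonneg (mul_nonneg (sq_nonneg _) (inv_nonneg.2 h1.le))]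
    calc (ξ ω - 1)^2 * (1 + p * (ξ ω - 1))⁻¹ ≤ (ξ ω - 1)^2 * 2 :=
          mul_le_mul_of_nonneg_left h2' (sq_nonneg _)
      _ = 2 * (ξ ω - 1)^2 := by ring
  have hX2xg : Integrable (fun ω => (ξ ω - 1)^2 * ξ ω * (1 + p * (ξ ω - 1))⁻¹) μ := by
    refine (h2x.const_mul 2).mono'
      ((((hmeas.sub measurable_const).pow_const 2).mul hmeas).mul hmD).aestronglyMeasurable ?_
    filter_upwards [hDpos, hDinv, hpos] with ω h1 h2' h3'
    have hnn : 0 ≤ (ξ ω - 1)^2 * ξ ω := mul_nonneg (sq_nonneg _) h3'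
    rw [Real.norm_eq_abs, abs_of_nonneg (mul_nonneg hnn (inv_nonneg.2 h1.le))]
    calc (ξ ω - 1)^2 * ξ ω * (1 + p * (ξ ω - 1))⁻¹ ≤ (ξ ω - 1)^2 * ξ ω * 2 :=
          mul_le_mul_of_nonneg_left h2' hnn
      _ = 2 * ((ξ ω - 1)^2 * ξ ω) := by ring
  -- mean zero of X
  have hXmean : ∫ ω, (ξ ω - 1) ∂μ = 0 := by
    rw [integral_sub hint (integrable_const 1), hmean]
    simp
  -- B decomposition
  have hBkey : ∀ᵐ ω ∂μ, (1 + p * (ξ ω - 1))⁻¹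
      = 1 - p * (ξ ω - 1) + p^2 * ((ξ ω - 1)^2 * (1 + p * (ξ ω - 1))⁻¹) := by
    filter_upwards [hDpos] with ω h1
    field_simp
    ring
  have hB : ∫ ω, (1 + p * (ξ ω - 1))⁻¹ ∂μ
      = 1 + p^2 * ∫ ω, (ξ ω - 1)^2 * (1 + p * (ξ ω - 1))⁻¹ ∂μ := by
    have h1 : Integrable (fun ω => 1 - p * (ξ ω - 1)) μ :=
      (integrable_const 1).sub (hX.const_mul p)
    have h2' : Integrable (fun ω => p^2 * ((ξ ω - 1)^2 * (1 + p * (ξ ω - 1))⁻¹)) μ :=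
      hX2g.const_mul (p^2)
    have e1 : ∫ ω, (1 - p * (ξ ω - 1)
        + p^2 * ((ξ ω - 1)^2 * (1 + p * (ξ ω - 1))⁻¹)) ∂μ
        = (∫ ω, (1 - p * (ξ ω - 1)) ∂μ)
          + ∫ ω, p^2 * ((ξ ω - 1)^2 * (1 + p * (ξ ω - 1))⁻¹) ∂μ :=
      integral_add h1 h2'
    have e2 : ∫ ω, (1 - p * (ξ ω - 1)) ∂μ
        = (∫ ω, (1:ℝ) ∂μ) - ∫ ω, p * (ξ ω - 1) ∂μ :=
      integral_sub (integrable_const 1) (hX.const_mul p)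
    rw [integral_congr_ae hBkey, e1, e2, integral_const_mul, integral_const_mul, hXmean]
    simp
  -- A decomposition
  have hXxi_eq : (fun ω => (ξ ω - 1) * ξ ω) = fun ω => (ξ ω - 1)^2 + (ξ ω - 1) := by
    funext ω; ring
  have hXxi : Integrable (fun ω => (ξ ω - 1) * ξ ω) μ := by
    rw [hXxi_eq]; exact h2.add hX
  have hXxi_int : ∫ ω, (ξ ω - 1) * ξ ω ∂μ = ∫ ω, (ξ ω - 1)^2 ∂μ := by
    rw [hXxi_eq, integral_add h2 hX, hXmean, add_zero]
  have hAkey : ∀ᵐ ω ∂μ, (1 + p * (ξ ω - 1))⁻¹ * ξ ω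
      = ξ ω - p * ((ξ ω - 1) * ξ ω)
        + p^2 * ((ξ ω - 1)^2 * ξ ω * (1 + p * (ξ ω - 1))⁻¹) := by
    filter_upwards [hDpos] with ω h1
    field_simp
    ring
  have hA : ∫ ω, (1 + p * (ξ ω - 1))⁻¹ * ξ ω ∂μ
      = 1 - p * (∫ ω, (ξ ω - 1)^2 ∂μ)
        + p^2 * ∫ ω, (ξ ω - 1)^2 * ξ ω * (1 + p * (ξ ω - 1))⁻¹ ∂μ := by
    have h1 : Integrable (fun ω => ξ ω - p * ((ξ ω - 1) * ξ ω)) μ :=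
      hint.sub (hXxi.const_mul p)
    have h2' : Integrable
        (fun ω => p^2 * ((ξ ω - 1)^2 * ξ ω * (1 + p * (ξ ω - 1))⁻¹)) μ :=
      hX2xg.const_mul (p^2)
    have e1 : ∫ ω, (ξ ω - p * ((ξ ω - 1) * ξ ω)
        + p^2 * ((ξ ω - 1)^2 * ξ ω * (1 + p * (ξ ω - 1))⁻¹)) ∂μ
        = (∫ ω, (ξ ω - p * ((ξ ω - 1) * ξ ω)) ∂μ)
          + ∫ ω, p^2 * ((ξ ω - 1)^2 * ξ ω * (1 + p * (ξ ω - 1))⁻¹) ∂μ :=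
      integral_add h1 h2'
    have e2 : ∫ ω, (ξ ω - p * ((ξ ω - 1) * ξ ω)) ∂μ
        = (∫ ω, ξ ω ∂μ) - ∫ ω, p * ((ξ ω - 1) * ξ ω) ∂μ :=
      integral_sub hint (hXxi.const_mul p)
    rw [integral_congr_ae hAkey, e1, e2, integral_const_mul, integral_const_mul,
      hmean, hXxi_int]
  -- bounds
  have hX2g_nonneg : 0 ≤ ∫ ω, (ξ ω - 1)^2 * (1 + p * (ξ ω - 1))⁻¹ ∂μ := by
    refine integral_nonneg_of_ae ?_
    filter_upwards [hDpos] with ω h1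
    exact mul_nonneg (sq_nonneg _) (inv_nonneg.2 h1.le)
  have hBge : 1 ≤ ∫ ω, (1 + p * (ξ ω - 1))⁻¹ ∂μ := by
    rw [hB]; nlinarith [sq_nonneg p]
  have hX2xg_le : ∫ ω, (ξ ω - 1)^2 * ξ ω * (1 + p * (ξ ω - 1))⁻¹ ∂μ
      ≤ 2 * ∫ ω, (ξ ω - 1)^2 * ξ ω ∂μ := by
    rw [← integral_const_mul]
    refine integral_mono_ae hX2xg (h2x.const_mul 2) ?_
    filter_upwards [hDpos, hDinv, hpos] with ω h1 h2' h3'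
    have hnn : 0 ≤ (ξ ω - 1)^2 * ξ ω := mul_nonneg (sq_nonneg _) h3'
    calc (ξ ω - 1)^2 * ξ ω * (1 + p * (ξ ω - 1))⁻¹ ≤ (ξ ω - 1)^2 * ξ ω * 2 :=
          mul_le_mul_of_nonneg_left h2' hnn
      _ = 2 * ((ξ ω - 1)^2 * ξ ω) := by ring
  -- positivity of A
  have hgx_nonneg : ∀ᵐ ω ∂μ, 0 ≤ (1 + p * (ξ ω - 1))⁻¹ * ξ ω := by
    filter_upwards [hDpos, hpos] with ω h1 h3'
    exact mul_nonneg (inv_nonneg.2 h1.le) h3'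
  have hApos : 0 < ∫ ω, (1 + p * (ξ ω - 1))⁻¹ * ξ ω ∂μ := by
    rcases lt_or_eq_of_le (integral_nonneg_of_ae hgx_nonneg) with h | h
    · exact h
    · exfalso
      have h0 : (fun ω => (1 + p * (ξ ω - 1))⁻¹ * ξ ω) =ᵐ[μ] 0 :=
        (integral_eq_zero_iff_of_nonneg_ae hgx_nonneg hgx).mp h.symm
      have hxi0 : ξ =ᵐ[μ] 0 := by
        filter_upwards [h0, hDpos] with ω hω h1
        have : (1 + p * (ξ ω - 1))⁻¹ ≠ 0 := inv_ne_zero (ne_of_gt h1)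
        simpa [this] using hω
      have : ∫ ω, ξ ω ∂μ = 0 := by
        rw [integral_congr_ae hxi0]; simp
      rw [hmean] at this
      norm_num at this
  -- nonnegativity of moments
  have hVnn : 0 ≤ ∫ ω, (ξ ω - 1)^2 ∂μ := integral_nonneg fun ω => sq_nonneg _
  have hMnn : 0 ≤ ∫ ω, (ξ ω - 1)^2 * ξ ω ∂μ := by
    refine integral_nonneg_of_ae ?_
    filter_upwards [hpos] with ω h3'
    exact mul_nonneg (sq_nonneg _) h3'
  have hTnn : 0 ≤ ∫ ω, |ξ ω - 1|^3 ∂μ :=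
    integral_nonneg fun ω => pow_nonneg (abs_nonneg _) 3
  -- assemble
  have hlogA : Real.log (∫ ω, (1 + p * (ξ ω - 1))⁻¹ * ξ ω ∂μ)
      ≤ (∫ ω, (1 + p * (ξ ω - 1))⁻¹ * ξ ω ∂μ) - 1 :=
    Real.log_le_sub_one_of_pos hApos
  have hlogB : 0 ≤ Real.log (∫ ω, (1 + p * (ξ ω - 1))⁻¹ ∂μ) :=
    Real.log_nonneg hBge
  have hAle : (∫ ω, (1 + p * (ξ ω - 1))⁻¹ * ξ ω ∂μ)
      ≤ 1 - p * (∫ ω, (ξ ω - 1)^2 ∂μ) + 2 * p^2 * ∫ ω, (ξ ω - 1)^2 * ξ ω ∂μ := by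
    rw [hA]; nlinarith [sq_nonneg p]
  nlinarith [sq_nonneg p, mul_nonneg hMnn (sq_nonneg p), mul_nonneg hVnn (sq_nonneg p),
    mul_nonneg hTnn (sq_nonneg p)]
end

section
/- Let ξ be a random variable taking values in [0,∞) with E[ξ]=1 and finite third moment. Then for all p, θ ∈ (0,1/2), ((1-θ)/θ)·log E[(1 + p(ξ-1))^{θ/(1-θ)}] ≤ −(p^2/2)·Var(ξ) + C·(p^3 + θ·p^2), where C is a constant depending only on the law of ξ (one may take C = 4E[|ξ-1|^3] + Var(ξ)). -/
/-!
Put `α = θ / (1 - θ) ∈ (0, 1)`. For `x > -1`,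
`(1 + x) ^ α ≤ 1 + α x + α (α - 1) / 2 x² + α / 3 |x|³`:
comparing derivatives, this reduces to Bernoulli-type bounds on `(1 + x) ^ (α - 1)`.
Applied to the centred variable `x = p (ξ - 1)` and integrated, this bounds `E[(1 + x) ^ α]`;
then `log y ≤ y - 1`, division by `α`, and `α ≤ 2θ` turn `(α - 1) / 2` into at most `-1/2 + θ`.
-/

open MeasureTheory Real Set

theorem one_add_mul_self_le_rpow_one_add_of_nonpos {s : ℝ} (hs : -1 < s) {p : ℝ}
    (hp1 : -1 ≤ p) (hp2 : p ≤ 0) : 1 + p * s ≤ (1 + s) ^ p := by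
  have hs' : 0 < 1 + s := by linarith
  rcases le_or_gt (1 + p * s) 0 with h | h
  · exact h.trans (rpow_pos_of_pos hs' _).le
  have hconc : (1 + s) ^ (-p) ≤ 1 + -p * s :=
    rpow_one_add_le_one_add_mul_self hs.le (by linarith) (by linarith)
  have hpos : 0 < (1 + s) ^ (-p) := rpow_pos_of_pos hs' _
  -- multiply by `1 + p * s` and use `(1 + p * s) * (1 - p * s) ≤ 1`
  rw [← inv_inv ((1 + s) ^ p), ← rpow_neg hs'.le, ← one_div, le_div_iff₀ hpos]
  nlinarith [mul_le_mul_of_nonneg_left hconc h.le, sq_nonneg (p * s)]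

theorem rpow_one_add_le_one_add_mul_self_add_sq {s : ℝ} (hs : 0 ≤ s) {p : ℝ}
    (hp1 : -1 ≤ p) (hp2 : p ≤ 0) : (1 + s) ^ p ≤ 1 + p * s + s ^ 2 := by
  have hs' : 0 < 1 + s := by linarith
  -- concavity of `t ↦ t ^ (-p)`, evaluated at `t = (1 + s)⁻¹`
  have hconc : (1 + ((1 + s)⁻¹ - 1)) ^ (-p) ≤ 1 + -p * ((1 + s)⁻¹ - 1) :=
    rpow_one_add_le_one_add_mul_self (by linarith [inv_pos.mpr hs']) (by linarith) (by linarith)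
  rw [add_sub_cancel, inv_rpow hs'.le, ← rpow_neg hs'.le, neg_neg] at hconc
  refine hconc.trans ?_
  have hq : 0 ≤ s / (1 + s) := by positivity
  have hinv : (1 + s)⁻¹ - 1 = -(s / (1 + s)) := by field_simp; ring
  have hmul : s / (1 + s) * (1 + s) = s := div_mul_cancel₀ s hs'.ne'
  rw [hinv]
  nlinarith [mul_nonneg hq hs]

theorem hasDerivAt_taylor_sub_one_add_rpow (α c : ℝ) {y : ℝ} (hy : -1 < y) :
    HasDerivAt (fun x => 1 + α * x + α * (α - 1) / 2 * x ^ 2 + c * x ^ 3 - (1 + x) ^ α)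
      (α + α * (α - 1) * y + 3 * c * y ^ 2 - α * (1 + y) ^ (α - 1)) y := by
  have hpow := ((hasDerivAt_id y).const_add 1).rpow_const (p := α) (Or.inl (by simp; linarith))
  have hpoly := ((((hasDerivAt_id y).const_mul α).const_add 1).add
    ((hasDerivAt_pow 2 y).const_mul (α * (α - 1) / 2))).add ((hasDerivAt_pow 3 y).const_mul c)
  refine (hpoly.sub hpow).congr_deriv ?_
  norm_num
  ring

theorem rpow_one_add_le_taylor_add_cube {α x : ℝ} (hα0 : 0 ≤ α) (hα1 : α ≤ 1) (hx : 0 ≤ x) :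
    (1 + x) ^ α ≤ 1 + α * x + α * (α - 1) / 2 * x ^ 2 + α / 3 * x ^ 3 := by
  have hderiv := fun y (hy : y ∈ Ici (0 : ℝ)) =>
    hasDerivAt_taylor_sub_one_add_rpow α (α / 3) (y := y) (by linarith [mem_Ici.mp hy])
  have hmono := monotoneOn_of_hasDerivWithinAt_nonneg (convex_Ici 0)
    (fun y hy => (hderiv y hy).continuousAt.continuousWithinAt)
    (fun y hy => (hderiv y (interior_subset hy)).hasDerivWithinAt) fun y hy => by
      have hbound := rpow_one_add_le_one_add_mul_self_add_sq (interior_subset hy (s := Ici 0))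
        (p := α - 1) (by linarith) (by linarith)
      nlinarith
  have hgap := hmono self_mem_Ici hx hx
  norm_num at hgap
  linarith

theorem rpow_one_add_le_taylor_of_nonpos {α x : ℝ} (hα0 : 0 ≤ α) (hα1 : α ≤ 1) (hx1 : -1 < x)
    (hx0 : x ≤ 0) : (1 + x) ^ α ≤ 1 + α * x + α * (α - 1) / 2 * x ^ 2 := by
  have hderiv := fun y (hy : y ∈ Ioc (-1 : ℝ) 0) =>
    hasDerivAt_taylor_sub_one_add_rpow α 0 (y := y) hy.1
  have hanti := antitoneOn_of_hasDerivWithinAt_nonpos (convex_Ioc (-1) 0)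
    (fun y hy => (hderiv y hy).continuousAt.continuousWithinAt)
    (fun y hy => (hderiv y (interior_subset hy)).hasDerivWithinAt) fun y hy => by
      rw [interior_Ioc] at hy
      have hbound := one_add_mul_self_le_rpow_one_add_of_nonpos hy.1 (p := α - 1)
        (by linarith) (by linarith)
      nlinarith
  have hgap := hanti ⟨hx1, hx0⟩ ⟨by norm_num, le_rfl⟩ hx0
  norm_num at hgap
  linarith

theorem rpow_one_add_le_taylor_add_abs_cube {α x : ℝ} (hα0 : 0 ≤ α) (hα1 : α ≤ 1)
    (hx : -1 < x) : (1 + x) ^ α ≤ 1 + α * x + α * (α - 1) / 2 * x ^ 2 + α / 3 * |x| ^ 3 := by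
  rcases le_or_gt 0 x with h | h
  · rw [abs_of_nonneg h]
    exact rpow_one_add_le_taylor_add_cube hα0 hα1 h
  · have hquad := rpow_one_add_le_taylor_of_nonpos hα0 hα1 hx h.le
    have hcube : 0 ≤ α / 3 * |x| ^ 3 := by positivity
    linarith

section Integral

variable {Ω : Type*} [MeasurableSpace Ω] {μ : Measure Ω} {X : Ω → ℝ} {α : ℝ}

theorem integrable_rpow_one_add [IsFiniteMeasure μ] (hX : Integrable X μ)
    (hX1 : ∀ᵐ ω ∂μ, -1 ≤ X ω) (hα0 : 0 ≤ α) (hα1 : α ≤ 1) :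
    Integrable (fun ω => (1 + X ω) ^ α) μ := by
  refine ((integrable_const 1).add (hX.const_mul α)).mono'
    ((continuous_rpow_const hα0).comp_aestronglyMeasurable
      ((integrable_const 1).add hX).aestronglyMeasurable) ?_
  filter_upwards [hX1] with ω hω
  rw [norm_of_nonneg (rpow_nonneg (by linarith) _)]
  exact rpow_one_add_le_one_add_mul_self hω hα0 hα1

theorem integral_rpow_one_add_pos [IsProbabilityMeasure μ] (hX : Integrable X μ)
    (hX1 : ∀ᵐ ω ∂μ, -1 < X ω) (hα0 : 0 ≤ α) (hα1 : α ≤ 1) :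
    0 < ∫ ω, (1 + X ω) ^ α ∂μ := by
  have hpos : ∀ᵐ ω ∂μ, 0 < (1 + X ω) ^ α := by
    filter_upwards [hX1] with ω hω
    exact rpow_pos_of_pos (by linarith) _
  rw [integral_pos_iff_support_of_nonneg_ae (hpos.mono fun _ h => h.le)
    (integrable_rpow_one_add hX (hX1.mono fun _ h => h.le) hα0 hα1)]
  have hsupp : Function.support (fun ω => (1 + X ω) ^ α) =ᵐ[μ] univ :=
    ae_eq_univ.mpr (ae_iff.mp (hpos.mono fun _ h => h.ne'))
  simp [measure_congr hsupp]

theorem integral_rpow_one_add_le [IsProbabilityMeasure μ] (hX : Integrable X μ)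
    (hmean : ∫ ω, X ω ∂μ = 0) (hX2 : Integrable (fun ω => X ω ^ 2) μ)
    (hX3 : Integrable (fun ω => |X ω| ^ 3) μ) (hX1 : ∀ᵐ ω ∂μ, -1 < X ω)
    (hα0 : 0 ≤ α) (hα1 : α ≤ 1) :
    ∫ ω, (1 + X ω) ^ α ∂μ ≤
      1 + α * (α - 1) / 2 * ∫ ω, X ω ^ 2 ∂μ + α / 3 * ∫ ω, |X ω| ^ 3 ∂μ := by
  have hlin : Integrable (fun ω => 1 + α * X ω) μ := (integrable_const 1).add (hX.const_mul α)
  have hquad : Integrable (fun ω => 1 + α * X ω + α * (α - 1) / 2 * X ω ^ 2) μ :=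
    hlin.add (hX2.const_mul _)
  calc ∫ ω, (1 + X ω) ^ α ∂μ
      ≤ ∫ ω, 1 + α * X ω + α * (α - 1) / 2 * X ω ^ 2 + α / 3 * |X ω| ^ 3 ∂μ :=
        integral_mono_ae (integrable_rpow_one_add hX (hX1.mono fun _ h => h.le) hα0 hα1)
          (hquad.add (hX3.const_mul _))
          (hX1.mono fun _ h => rpow_one_add_le_taylor_add_abs_cube hα0 hα1 h)
    _ = 1 + α * (α - 1) / 2 * ∫ ω, X ω ^ 2 ∂μ + α / 3 * ∫ ω, |X ω| ^ 3 ∂μ := by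
        rw [integral_add hquad (hX3.const_mul _), integral_add hlin (hX2.const_mul _),
          integral_add (integrable_const 1) (hX.const_mul α)]
        simp [integral_const_mul, hmean]

theorem inv_mul_log_integral_rpow_one_add_le [IsProbabilityMeasure μ] (hX : Integrable X μ)
    (hmean : ∫ ω, X ω ∂μ = 0) (hX2 : Integrable (fun ω => X ω ^ 2) μ)
    (hX3 : Integrable (fun ω => |X ω| ^ 3) μ) (hX1 : ∀ᵐ ω ∂μ, -1 < X ω)
    (hα0 : 0 < α) (hα1 : α ≤ 1) :
    α⁻¹ * log (∫ ω, (1 + X ω) ^ α ∂μ) ≤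
      (α - 1) / 2 * ∫ ω, X ω ^ 2 ∂μ + 1 / 3 * ∫ ω, |X ω| ^ 3 ∂μ := by
  have hlog := log_le_sub_one_of_pos (integral_rpow_one_add_pos hX hX1 hα0.le hα1)
  have hint := integral_rpow_one_add_le hX hmean hX2 hX3 hX1 hα0.le hα1
  rw [inv_mul_le_iff₀ hα0]
  linarith

end Integral

theorem log_integral_fractional_power_le_general
    {Ω : Type*} [MeasurableSpace Ω] (μ : Measure Ω) [IsProbabilityMeasure μ]
    (ξ : Ω → ℝ)
    (hpos : ∀ᵐ ω ∂μ, 0 ≤ ξ ω)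
    (hint : Integrable ξ μ) (hmean : ∫ ω, ξ ω ∂μ = 1)
    (h2 : Integrable (fun ω => (ξ ω - 1)^2) μ)
    (h3 : Integrable (fun ω => |ξ ω - 1|^3) μ)
    (p θ : ℝ) (hp0 : 0 < p) (hp1 : p < 1/2) (hθ0 : 0 < θ) (hθ1 : θ < 1/2) :
    ((1 - θ) / θ) * Real.log (∫ ω, (1 + p * (ξ ω - 1)) ^ (θ / (1 - θ)) ∂μ) ≤
      -(p^2 / 2) * (∫ ω, (ξ ω - 1)^2 ∂μ) +
        (4 * (∫ ω, |ξ ω - 1|^3 ∂μ) + (∫ ω, (ξ ω - 1)^2 ∂μ)) * (p^3 + θ * p^2) := by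
  have hθ' : 0 < 1 - θ := by linarith
  have hα0 : 0 < θ / (1 - θ) := div_pos hθ0 hθ'
  have hα1 : θ / (1 - θ) ≤ 1 := (div_le_one hθ').mpr (by linarith)
  have hα2θ : θ / (1 - θ) ≤ 2 * θ := (div_le_iff₀ hθ').mpr (by nlinarith)
  have hcentered : Integrable (fun ω => ξ ω - 1) μ := hint.sub (integrable_const 1)
  have key := inv_mul_log_integral_rpow_one_add_le (hcentered.const_mul p)
    (by rw [integral_const_mul, integral_sub hint (integrable_const 1), hmean]; simp)
    (by simpa only [mul_pow] using h2.const_mul (p ^ 2))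
    (by simpa only [abs_mul, abs_of_pos hp0, mul_pow] using h3.const_mul (p ^ 3))
    (hpos.mono fun ω hω => by nlinarith) hα0 hα1
  simp only [mul_pow, abs_mul, abs_of_pos hp0, integral_const_mul, inv_div] at key
  have hV : 0 ≤ ∫ ω, (ξ ω - 1) ^ 2 ∂μ := integral_nonneg fun ω => sq_nonneg _
  have hM : 0 ≤ ∫ ω, |ξ ω - 1| ^ 3 ∂μ := integral_nonneg fun ω => by positivity
  refine key.trans ?_
  nlinarith [mul_nonneg hV (pow_nonneg hp0.le 3), mul_nonneg (mul_nonneg hM hθ0.le) (sq_nonneg p),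
    mul_nonneg (mul_nonneg hV (sub_nonneg.mpr hα2θ)) (sq_nonneg p), mul_nonneg hM (pow_nonneg hp0.le 3)]

theorem log_integral_fractional_power_le
    {Ω : Type*} [MeasurableSpace Ω] (μ : Measure Ω) [IsProbabilityMeasure μ]
    (ξ : Ω → ℝ) (hmeas : Measurable ξ)
    (hpos : ∀ᵐ ω ∂μ, 0 ≤ ξ ω)
    (hint : Integrable ξ μ) (hmean : ∫ ω, ξ ω ∂μ = 1)
    (h2 : Integrable (fun ω => (ξ ω - 1)^2) μ)
    (h3 : Integrable (fun ω => |ξ ω - 1|^3) μ)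
    (p θ : ℝ) (hp0 : 0 < p) (hp1 : p < 1/2) (hθ0 : 0 < θ) (hθ1 : θ < 1/2) :
    ((1 - θ) / θ) * Real.log (∫ ω, (1 + p * (ξ ω - 1)) ^ (θ / (1 - θ)) ∂μ) ≤
      -(p^2 / 2) * (∫ ω, (ξ ω - 1)^2 ∂μ) +
        (4 * (∫ ω, |ξ ω - 1|^3 ∂μ) + (∫ ω, (ξ ω - 1)^2 ∂μ)) * (p^3 + θ * p^2) :=
  log_integral_fractional_power_le_general μ ξ hpos hint hmean h2 h3 p θ hp0 hp1 hθ0 hθ1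
end

section
/- Let Λ be a finite set, let (ω_x)_{x∈Λ} be i.i.d. real random variables with λ(α) := log E[e^{αω}] finite, and let (δ_x)_{x∈Λ} be an arbitrary {0,1}^Λ-valued random vector, independent of ω, with law P_Λ. Then for every h > 0, E_ω[ log E_{P_Λ}[ exp(∑_{x∈Λ} (αω_x − λ(α) + h)δ_x) ] ] ≤ |Λ| · max_{p∈[0,1]} E[ log(1 + p(e^h ξ − 1)) ], where ξ := e^{αω − λ(α)}. -/
/-!
Reveal the sites one at a time. For `y ∉ s` one has
`Z_{s ∪ {y}} = Z_s * (1 + q * (exp c_y - 1))`, where `q ∈ [0, 1]` is the probability that `y` is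
occupied under the law of `δ` tilted by the weights on `s`. Since `q` depends only on the
disorder on `s`, integrating out `ω_y` first bounds the expected log-increment by the best
Bernoulli value `sup_p E log (1 + p (e^h ξ - 1))`; summing over the `|Λ|` sites gives the claim.
-/

open MeasureTheory

theorem one_add_mul_sub_one_pos {p E : ℝ} (hp : p ∈ Set.Icc (0 : ℝ) 1) (hE : 0 < E) :
    0 < 1 + p * (E - 1) := by
  nlinarith [hp.1, hp.2, mul_nonneg hp.1 hE.le]

theorem log_one_add_mul_exp_sub_one_le {p : ℝ} (hp : p ∈ Set.Icc (0 : ℝ) 1) (t : ℝ) :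
    Real.log (1 + p * (Real.exp t - 1)) ≤ Real.exp t := by
  have := Real.log_le_sub_one_of_pos (one_add_mul_sub_one_pos hp (Real.exp_pos t))
  nlinarith [hp.1, hp.2, Real.exp_pos t]

theorem integrable_of_integrable_add_of_le {α : Type*} [MeasurableSpace α] {μ : Measure α}
    {f g F G : α → ℝ} (hfg : Integrable (f + g) μ) (hf : AEStronglyMeasurable f μ)
    (hF : Integrable F μ) (hG : Integrable G μ) (hfF : f ≤ F) (hgG : g ≤ G) :
    Integrable f μ :=
  integrable_of_le_of_le hf (ae_of_all _ fun a => by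
      simp only [Pi.sub_apply, Pi.add_apply]
      linarith [hgG a])
    (ae_of_all _ hfF) (hfg.sub hG) hF

theorem measurable_integral_of_finite {A Δ : Type*} [MeasurableSpace A] [Finite Δ]
    [MeasurableSpace Δ] [MeasurableSingletonClass Δ] (P : Measure Δ) [IsFiniteMeasure P]
    {F : A → Δ → ℝ} (hF : ∀ δ, Measurable fun a => F a δ) :
    Measurable fun a => ∫ δ, F a δ ∂P := by
  have := Fintype.ofFinite Δ
  simp_rw [integral_fintype (Integrable.of_finite)]
  exact Finset.measurable_sum _ fun δ _ => (hF δ).const_smul (P.real {δ})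

section ResampleCoordinate

variable {κ : Type*} [Fintype κ] [DecidableEq κ] {X : κ → Type*} [∀ i, MeasurableSpace (X i)]
  (μ : ∀ i, Measure (X i)) [∀ i, IsProbabilityMeasure (μ i)]

theorem measurePreserving_update_prod (y : κ) :
    MeasurePreserving (fun p : (∀ i, X i) × X y => Function.update p.1 y p.2)
      ((Measure.pi μ).prod (μ y)) (Measure.pi μ) := by
  refine ⟨measurable_update', (Measure.pi_eq fun s hs => ?_).symm⟩
  have hpre : (fun p : (∀ i, X i) × X y => Function.update p.1 y p.2) ⁻¹' Set.univ.pi s =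
      Set.univ.pi (Function.update s y Set.univ) ×ˢ s y := by
    ext ⟨ω, u⟩
    simp only [Set.mem_preimage, Set.mem_univ_pi, Set.mem_prod]
    constructor
    · intro h
      refine ⟨fun i => ?_, by simpa using h y⟩
      rcases eq_or_ne i y with rfl | hi
      · simp
      · simpa [hi] using h i
    · rintro ⟨h, hu⟩ i
      rcases eq_or_ne i y with rfl | hi
      · simpa using hu
      · simpa [hi] using h i
  rw [Measure.map_apply measurable_update' (MeasurableSet.univ_pi hs), hpre,
    Measure.prod_prod, Measure.pi_pi, Fintype.prod_eq_mul_prod_compl y,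
    Fintype.prod_eq_mul_prod_compl y]
  simp only [Function.update_self, measure_univ, one_mul]
  rw [mul_comm]
  congr 1
  refine Finset.prod_congr rfl fun i hi => ?_
  rw [Function.update_of_ne (by simpa using hi)]

theorem integral_le_of_forall_integral_update_le {F : (∀ i, X i) → ℝ} {S : ℝ} (y : κ)
    (hF : Integrable F (Measure.pi μ))
    (hS : ∀ ω, ∫ u, F (Function.update ω y u) ∂μ y ≤ S) :
    ∫ ω, F ω ∂Measure.pi μ ≤ S := by
  have hmp := measurePreserving_update_prod μ y
  have hFu : Integrable (fun p : (∀ i, X i) × X y => F (Function.update p.1 y p.2))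
      ((Measure.pi μ).prod (μ y)) :=
    (hmp.integrable_comp hF.aestronglyMeasurable).2 hF
  calc ∫ ω, F ω ∂Measure.pi μ
      = ∫ p, F (Function.update p.1 y p.2) ∂(Measure.pi μ).prod (μ y) := by
        rw [← integral_map hmp.measurable.aemeasurable (by rw [hmp.map_eq]; exact hF.1),
          hmp.map_eq]
    _ = ∫ ω, ∫ u, F (Function.update ω y u) ∂μ y ∂Measure.pi μ := integral_prod _ hFu
    _ ≤ ∫ _ω, S ∂Measure.pi μ := integral_mono hFu.integral_prod_left (integrable_const S) hS
    _ = S := by simp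

end ResampleCoordinate

namespace ContactField

section PartitionFunction

variable {κ : Type*} (P : Measure (κ → Bool))

noncomputable def partitionFn (c : κ → ℝ) (s : Finset κ) : ℝ :=
  ∫ δ, Real.exp (∑ x ∈ s, c x * (if δ x then 1 else 0)) ∂P

/-- The probability that `δ y = true` under `P` tilted by `exp (∑ x ∈ s, c x * δ x)`. -/
noncomputable def occupationProb (c : κ → ℝ) (s : Finset κ) (y : κ) : ℝ :=
  (∫ δ, Real.exp (∑ x ∈ s, c x * (if δ x then 1 else 0)) * (if δ y then 1 else 0) ∂P) /
    partitionFn P c s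

theorem occupationProb_update_of_notMem [DecidableEq κ] (c : κ → ℝ) {s : Finset κ} {y : κ}
    (hy : y ∉ s) (a : ℝ) :
    occupationProb P (Function.update c y a) s y = occupationProb P c s y := by
  have hsum : ∀ δ : κ → Bool, ∑ x ∈ s, Function.update c y a x * (if δ x then 1 else 0) =
      ∑ x ∈ s, c x * (if δ x then 1 else 0) := fun δ =>
    Finset.sum_congr rfl fun x hx => by rw [Function.update_of_ne (ne_of_mem_of_not_mem hx hy)]
  simp only [occupationProb, partitionFn, hsum]

variable [Finite κ] [IsProbabilityMeasure P]

theorem partitionFn_pos (c : κ → ℝ) (s : Finset κ) : 0 < partitionFn P c s :=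
  integral_exp_pos Integrable.of_finite

theorem log_partitionFn_le (c : κ → ℝ) (s : Finset κ) :
    Real.log (partitionFn P c s) ≤ ∑ x ∈ s, Real.exp (c x) := by
  rw [Real.log_le_iff_le_exp (partitionFn_pos P c s)]
  calc partitionFn P c s ≤ ∫ _δ, Real.exp (∑ x ∈ s, Real.exp (c x)) ∂P := by
        refine integral_mono Integrable.of_finite (integrable_const _) fun δ => ?_
        refine Real.exp_le_exp.2 (Finset.sum_le_sum fun x _ => ?_)
        split_ifs
        · linarith [Real.add_one_le_exp (c x)]
        · simpa using (Real.exp_pos (c x)).le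
    _ = Real.exp (∑ x ∈ s, Real.exp (c x)) := by simp

theorem occupationProb_mem_Icc (c : κ → ℝ) (s : Finset κ) (y : κ) :
    occupationProb P c s y ∈ Set.Icc (0 : ℝ) 1 := by
  have hZ := partitionFn_pos P c s
  refine ⟨div_nonneg (integral_nonneg fun δ => ?_) hZ.le, (div_le_one hZ).2 ?_⟩
  · split_ifs <;> simp [(Real.exp_pos _).le]
  · refine integral_mono Integrable.of_finite Integrable.of_finite fun δ => ?_
    split_ifs <;> simp [(Real.exp_pos _).le]

theorem partitionFn_insert [DecidableEq κ] (c : κ → ℝ) {s : Finset κ} {y : κ} (hy : y ∉ s) :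
    partitionFn P c (insert y s) =
      partitionFn P c s * (1 + occupationProb P c s y * (Real.exp (c y) - 1)) := by
  have hZ := (partitionFn_pos P c s).ne'
  have hsplit : ∀ δ : κ → Bool,
      Real.exp (∑ x ∈ insert y s, c x * (if δ x then 1 else 0)) =
        Real.exp (∑ x ∈ s, c x * (if δ x then 1 else 0)) + (Real.exp (c y) - 1) *
          (Real.exp (∑ x ∈ s, c x * (if δ x then 1 else 0)) * (if δ y then 1 else 0)) := by
    intro δ
    rw [Finset.sum_insert hy, Real.exp_add]
    split_ifs
    · simp only [mul_one]
      ring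
    · simp
  rw [occupationProb, mul_add, mul_one, ← mul_assoc, mul_div_cancel₀ _ hZ, partitionFn]
  simp_rw [hsplit]
  rw [integral_add Integrable.of_finite Integrable.of_finite, integral_const_mul, mul_comm]
  rfl

theorem measurable_partitionFn (s : Finset κ) : Measurable fun c => partitionFn P c s :=
  measurable_integral_of_finite P fun _ => by fun_prop

theorem measurable_occupationProb (s : Finset κ) (y : κ) :
    Measurable fun c => occupationProb P c s y :=
  (measurable_integral_of_finite P fun _ => by fun_prop).div (measurable_partitionFn P s)

theorem log_partitionFn_insert [DecidableEq κ] (c : κ → ℝ) {s : Finset κ} {y : κ} (hy : y ∉ s) :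
    Real.log (partitionFn P c (insert y s)) =
      Real.log (partitionFn P c s) +
        Real.log (1 + occupationProb P c s y * (Real.exp (c y) - 1)) := by
  rw [partitionFn_insert P c hy, Real.log_mul (partitionFn_pos P c s).ne'
    (one_add_mul_sub_one_pos (occupationProb_mem_Icc P c s y) (Real.exp_pos _)).ne']

end PartitionFunction

section Bernoulli

variable {X : Type*} [MeasurableSpace X] (μ : Measure X) {g : X → ℝ}

noncomputable def bernoulliSup (g : X → ℝ) : ℝ :=
  ⨆ p : Set.Icc (0 : ℝ) 1, ∫ x, Real.log (1 + (p : ℝ) * (Real.exp (g x) - 1)) ∂μ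

theorem bddAbove_range_bernoulli (hg : Integrable (fun x => Real.exp (g x)) μ) :
    BddAbove (Set.range fun p : Set.Icc (0 : ℝ) 1 =>
      ∫ x, Real.log (1 + (p : ℝ) * (Real.exp (g x) - 1)) ∂μ) := by
  refine ⟨∫ x, Real.exp (g x) ∂μ, ?_⟩
  rintro _ ⟨p, rfl⟩
  dsimp only
  by_cases hi : Integrable (fun x => Real.log (1 + (p : ℝ) * (Real.exp (g x) - 1))) μ
  · exact integral_mono hi hg fun x => log_one_add_mul_exp_sub_one_le p.2 (g x)
  · rw [integral_undef hi]
    exact integral_nonneg fun x => (Real.exp_pos _).le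

theorem le_bernoulliSup (hg : Integrable (fun x => Real.exp (g x)) μ) {q : ℝ}
    (hq : q ∈ Set.Icc (0 : ℝ) 1) :
    ∫ x, Real.log (1 + q * (Real.exp (g x) - 1)) ∂μ ≤ bernoulliSup μ g :=
  le_ciSup (bddAbove_range_bernoulli μ hg) ⟨q, hq⟩

theorem bernoulliSup_nonneg (hg : Integrable (fun x => Real.exp (g x)) μ) :
    0 ≤ bernoulliSup μ g := by
  simpa using le_bernoulliSup μ hg (q := 0) ⟨le_rfl, zero_le_one⟩

end Bernoulli

section Quenched

variable {κ : Type*} [Fintype κ] [DecidableEq κ] (P : Measure (κ → Bool)) [IsProbabilityMeasure P]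
  {X : Type*} [MeasurableSpace X] (μ : Measure X) [IsProbabilityMeasure μ] {g : X → ℝ}

theorem integral_log_one_add_occupationProb_le (hexp : Integrable (fun x => Real.exp (g x)) μ)
    {t : Finset κ} {y : κ} (hy : y ∉ t)
    (hint : Integrable (fun ω : κ → X =>
      Real.log (1 + occupationProb P (g ∘ ω) t y * (Real.exp (g (ω y)) - 1)))
      (Measure.pi fun _ => μ)) :
    ∫ ω, Real.log (1 + occupationProb P (g ∘ ω) t y * (Real.exp (g (ω y)) - 1))
      ∂Measure.pi (fun _ => μ) ≤ bernoulliSup μ g := by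
  refine integral_le_of_forall_integral_update_le (fun _ => μ) y hint fun ω => ?_
  simp only [Function.comp_update, occupationProb_update_of_notMem P _ hy, Function.update_self]
  exact le_bernoulliSup μ hexp (occupationProb_mem_Icc P _ t y)

theorem integral_log_partitionFn_le (hg : Measurable g)
    (hexp : Integrable (fun x => Real.exp (g x)) μ) (s : Finset κ) :
    ∫ ω, Real.log (partitionFn P (g ∘ ω) s) ∂Measure.pi (fun _ => μ) ≤
      s.card * bernoulliSup μ g := by
  induction s using Finset.induction_on with
  | empty => simp [partitionFn]
  | insert y t hy ih =>
    set φ : (κ → X) → ℝ := fun ω =>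
      Real.log (1 + occupationProb P (g ∘ ω) t y * (Real.exp (g (ω y)) - 1))
    have hdecomp : (fun ω : κ → X => Real.log (partitionFn P (g ∘ ω) (insert y t))) =
        (fun ω => Real.log (partitionFn P (g ∘ ω) t)) + φ :=
      funext fun ω => log_partitionFn_insert P (g ∘ ω) hy
    by_cases hint : Integrable (fun ω : κ → X => Real.log (partitionFn P (g ∘ ω) (insert y t)))
      (Measure.pi fun _ => μ)
    swap
    · rw [integral_undef hint]
      exact mul_nonneg (Nat.cast_nonneg _) (bernoulliSup_nonneg μ hexp)
    -- Only upper bounds of the two pieces are integrable (`ω` itself need not be), so their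
    -- integrability is read off from that of the sum.
    rw [hdecomp] at hint
    have hgω : Measurable fun ω : κ → X => g ∘ ω :=
      measurable_pi_lambda _ fun x => hg.comp (measurable_pi_apply x)
    have hexp_eval (x : κ) : Integrable (fun ω : κ → X => Real.exp (g (ω x)))
        (Measure.pi fun _ => μ) :=
      integrable_comp_eval (μ := fun _ => μ) hexp
    have hZ_int := integrable_of_integrable_add_of_le hint
      ((measurable_partitionFn P t).comp hgω).log.aestronglyMeasurable
      (integrable_finsetSum t fun x _ => hexp_eval x) (hexp_eval y)
      (fun ω => log_partitionFn_le P (g ∘ ω) t)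
      (fun ω => log_one_add_mul_exp_sub_one_le (occupationProb_mem_Icc P _ t y) _)
    have hφ_int : Integrable φ (Measure.pi fun _ => μ) :=
      integrable_of_integrable_add_of_le (add_comm _ φ ▸ hint)
      (measurable_const.add (((measurable_occupationProb P t y).comp hgω).mul
        ((hg.comp (measurable_pi_apply y)).exp.sub_const 1))).log.aestronglyMeasurable
      (hexp_eval y) (integrable_finsetSum t fun x _ => hexp_eval x)
      (fun ω => log_one_add_mul_exp_sub_one_le (occupationProb_mem_Icc P _ t y) _)
      (fun ω => log_partitionFn_le P (g ∘ ω) t)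
    calc ∫ ω, Real.log (partitionFn P (g ∘ ω) (insert y t)) ∂Measure.pi (fun _ => μ)
        = ∫ ω, Real.log (partitionFn P (g ∘ ω) t) ∂Measure.pi (fun _ => μ) +
            ∫ ω, φ ω ∂Measure.pi (fun _ => μ) := by
          rw [hdecomp, integral_add' hZ_int hφ_int]
      _ ≤ t.card * bernoulliSup μ g + bernoulliSup μ g :=
          add_le_add ih (integral_log_one_add_occupationProb_le P μ hexp hy hφ_int)
      _ = (insert y t).card * bernoulliSup μ g := by
          rw [Finset.card_insert_of_notMem hy]
          push_cast
          ring

end Quenched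

end ContactField

theorem quenched_log_partition_le_bernoulli_sup_general
    {ι : Type*} (Λ : Finset ι)
    (μ : Measure ℝ) [IsProbabilityMeasure μ]
    (P : Measure (Λ → Bool)) [IsProbabilityMeasure P]
    (α h : ℝ)
    (hexp : Integrable (fun x => Real.exp (α * x)) μ)
    (lam : ℝ) :
    (∫ ω, Real.log (∫ δ, Real.exp (∑ x : Λ,
          (α * ω x - lam + h) * (if δ x then 1 else 0)) ∂P)
        ∂(Measure.pi fun _ : Λ => μ)) ≤
      (Λ.card : ℝ) *
        ⨆ p : Set.Icc (0:ℝ) 1,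
          ∫ x, Real.log (1 + (p : ℝ) * (Real.exp h * Real.exp (α * x - lam) - 1)) ∂μ := by
  classical
  have hexp_shift : Integrable (fun x => Real.exp (α * x - lam + h)) μ := by
    refine (hexp.const_mul (Real.exp (h - lam))).congr (ae_of_all _ fun x => ?_)
    simp only [← Real.exp_add]
    ring_nf
  have hbound := ContactField.integral_log_partitionFn_le P μ (by fun_prop) hexp_shift Finset.univ
  have hsup : ContactField.bernoulliSup μ (fun x => α * x - lam + h) = ⨆ p : Set.Icc (0:ℝ) 1,
      ∫ x, Real.log (1 + (p : ℝ) * (Real.exp h * Real.exp (α * x - lam) - 1)) ∂μ := by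
    simp only [ContactField.bernoulliSup, Real.exp_add, mul_comm _ (Real.exp h)]
  rw [Finset.card_univ, Fintype.card_coe, hsup] at hbound
  exact hbound

/-- Annealed-type upper bound: the quenched free energy of an arbitrary contact field
`δ` in an IID environment `ω` is bounded by `|Λ|` times the optimal Bernoulli value. -/
theorem quenched_log_partition_le_bernoulli_sup
    {ι : Type*} (Λ : Finset ι)
    (μ : Measure ℝ) [IsProbabilityMeasure μ]
    (P : Measure (Λ → Bool)) [IsProbabilityMeasure P]
    (α h : ℝ) (hh : 0 < h)
    (hexp : Integrable (fun x => Real.exp (α * x)) μ)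
    (lam : ℝ) (hlam : lam = Real.log (∫ x, Real.exp (α * x) ∂μ)) :
    (∫ ω, Real.log (∫ δ, Real.exp (∑ x : Λ,
          (α * ω x - lam + h) * (if δ x then 1 else 0)) ∂P)
        ∂(Measure.pi fun _ : Λ => μ)) ≤
      (Λ.card : ℝ) *
        ⨆ p : Set.Icc (0:ℝ) 1,
          ∫ x, Real.log (1 + (p : ℝ) * (Real.exp h * Real.exp (α * x - lam) - 1)) ∂μ :=
  quenched_log_partition_le_bernoulli_sup_general Λ μ P α h hexp lam
end

section
/- Let Λ be a finite set, (ω_x)_{x∈Λ} i.i.d. positive random variables, (δ_x)_{x∈Λ} an arbitrary {0,1}^Λ-valued random vector independent of ω, θ ∈ (0,1), and h > 0. Then log E_ω[ ( E_{P_Λ}[ exp(∑_{x∈Λ}(αω_x − λ(α) + h)δ_x) ] )^θ ] ≤ |Λ| · max_{p∈[0,1]} log E[ (1 + p(e^h ξ − 1))^θ ], where ξ := e^{αω−λ(α)} and λ(α) = log E[e^{αω}]. -/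
/-!
Write the inner expectation as `Z(ω) = E_P[∏_{x : δ_x = 1} g(ω_x)]` with `g = e^h ξ`. As a function
of one coordinate `ω_a`, `Z = A + (g(ω_a) - 1) B` where `A` and `B` do not depend on `ω_a` and
`0 ≤ B ≤ A` (`B` keeps only the configurations with `δ_a = 1`). Hence
`Z^θ = A^θ (1 + p (g(ω_a) - 1))^θ` with `p = B / A ∈ [0, 1]`, so integrating out `ω_a` costs at most
the factor `exp S`, `S = sup_p log E[(1 + p (g - 1))^θ]`, and leaves `A^θ`, where `A` is the same
kind of sum over one site fewer. Integrating out the sites one at a time gives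
`E_ω[Z^θ] ≤ exp (|Λ| S)`.
-/

open MeasureTheory

section FractionalMoment

variable {μ : Measure ℝ} {g : ℝ → ℝ} {θ : ℝ}

noncomputable def fracMomentSup (μ : Measure ℝ) (g : ℝ → ℝ) (θ : ℝ) : ℝ :=
  ⨆ p : Set.Icc (0:ℝ) 1, Real.log (∫ x, (1 + (p : ℝ) * (g x - 1)) ^ θ ∂μ)

lemma one_add_mul_sub_one_nonneg {p c : ℝ} (hp : p ∈ Set.Icc (0:ℝ) 1) (hc : 0 ≤ c) :
    0 ≤ 1 + p * (c - 1) := by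
  nlinarith [hp.1, hp.2]

lemma one_add_mul_sub_one_rpow_le {p c : ℝ} (hp : p ∈ Set.Icc (0:ℝ) 1) (hc : 0 ≤ c)
    (hθ : θ ∈ Set.Icc (0:ℝ) 1) : (1 + p * (c - 1)) ^ θ ≤ 1 + c := by
  obtain ⟨hp0, hp1⟩ := hp
  obtain ⟨hθ0, hθ1⟩ := hθ
  calc (1 + p * (c - 1)) ^ θ ≤ 1 + θ * (p * (c - 1)) :=
        rpow_one_add_le_one_add_mul_self (by nlinarith) hθ0 hθ1
    _ ≤ 1 + c := by nlinarith [mul_nonneg hθ0 hp0, mul_le_one₀ hθ1 hp0 hp1]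

lemma integrable_one_add_mul_sub_one_rpow [IsFiniteMeasure μ] (hg : ∀ x, 0 ≤ g x)
    (hgi : Integrable g μ) (hθ : θ ∈ Set.Icc (0:ℝ) 1) {p : ℝ} (hp : p ∈ Set.Icc (0:ℝ) 1) :
    Integrable (fun x => (1 + p * (g x - 1)) ^ θ) μ := by
  refine ((integrable_const 1).add hgi).mono' ?_ (ae_of_all _ fun x => ?_)
  · have := hgi.aestronglyMeasurable
    have := hθ.1
    fun_prop (disch := assumption)
  · rw [Real.norm_of_nonneg (Real.rpow_nonneg (one_add_mul_sub_one_nonneg hp (hg x)) θ)]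
    exact one_add_mul_sub_one_rpow_le hp (hg x) hθ

lemma bddAbove_log_integral_one_add_mul_sub_one_rpow [IsFiniteMeasure μ] (hg : ∀ x, 0 ≤ g x)
    (hgi : Integrable g μ) (hθ : θ ∈ Set.Icc (0:ℝ) 1) :
    BddAbove (Set.range fun p : Set.Icc (0:ℝ) 1 =>
      Real.log (∫ x, (1 + (p : ℝ) * (g x - 1)) ^ θ ∂μ)) := by
  refine ⟨∫ x, (1 + g x) ∂μ, ?_⟩
  rintro - ⟨p, rfl⟩
  calc Real.log (∫ x, (1 + (p : ℝ) * (g x - 1)) ^ θ ∂μ)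
      ≤ ∫ x, (1 + (p : ℝ) * (g x - 1)) ^ θ ∂μ :=
        Real.log_le_self <| integral_nonneg fun x =>
          Real.rpow_nonneg (one_add_mul_sub_one_nonneg p.2 (hg x)) θ
    _ ≤ ∫ x, (1 + g x) ∂μ :=
        integral_mono (integrable_one_add_mul_sub_one_rpow hg hgi hθ p.2)
          ((integrable_const 1).add hgi) fun x => one_add_mul_sub_one_rpow_le p.2 (hg x) hθ

lemma integral_one_add_mul_sub_one_rpow_le_exp [IsFiniteMeasure μ] (hg : ∀ x, 0 ≤ g x)
    (hgi : Integrable g μ) (hθ : θ ∈ Set.Icc (0:ℝ) 1) {p : ℝ} (hp : p ∈ Set.Icc (0:ℝ) 1) :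
    ∫ x, (1 + p * (g x - 1)) ^ θ ∂μ ≤ Real.exp (fracMomentSup μ g θ) :=
  (Real.le_exp_log _).trans <| Real.exp_le_exp.2 <|
    le_ciSup (bddAbove_log_integral_one_add_mul_sub_one_rpow hg hgi hθ) ⟨p, hp⟩

lemma fracMomentSup_nonneg [IsProbabilityMeasure μ] (hg : ∀ x, 0 ≤ g x)
    (hgi : Integrable g μ) (hθ : θ ∈ Set.Icc (0:ℝ) 1) : 0 ≤ fracMomentSup μ g θ := by
  simpa [fracMomentSup] using le_ciSup (bddAbove_log_integral_one_add_mul_sub_one_rpow hg hgi hθ)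
    ⟨0, Set.left_mem_Icc.2 zero_le_one⟩

lemma lintegral_ofReal_rpow_add_mul_le [IsFiniteMeasure μ] (hg : ∀ x, 0 ≤ g x)
    (hgi : Integrable g μ) (hθ : θ ∈ Set.Icc (0:ℝ) 1) {A B : ℝ} (hB : 0 ≤ B) (hBA : B ≤ A) :
    ∫⁻ y, ENNReal.ofReal ((A + (g y - 1) * B) ^ θ) ∂μ ≤
      ENNReal.ofReal (A ^ θ) * ENNReal.ofReal (Real.exp (fracMomentSup μ g θ)) := by
  have hA : 0 ≤ A := hB.trans hBA
  set p := B / A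
  have hp : p ∈ Set.Icc (0:ℝ) 1 := ⟨div_nonneg hB hA, div_le_one_of_le₀ hBA hA⟩
  have hAp : A * p = B := by
    rcases hA.eq_or_lt with rfl | hA
    · simp [le_antisymm hBA hB]
    · exact mul_div_cancel₀ B hA.ne'
  have hsplit : ∀ y, (A + (g y - 1) * B) ^ θ = A ^ θ * (1 + p * (g y - 1)) ^ θ := fun y => by
    rw [← Real.mul_rpow hA (one_add_mul_sub_one_nonneg hp (hg y)), ← hAp]
    ring_nf
  simp_rw [hsplit, ENNReal.ofReal_mul (Real.rpow_nonneg hA θ)]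
  rw [lintegral_const_mul' _ _ ENNReal.ofReal_ne_top, ← ofReal_integral_eq_lintegral_ofReal
    (integrable_one_add_mul_sub_one_rpow hg hgi hθ hp)
    (ae_of_all _ fun y => Real.rpow_nonneg (one_add_mul_sub_one_nonneg hp (hg y)) θ)]
  gcongr
  exact integral_one_add_mul_sub_one_rpow_le_exp hg hgi hθ hp

end FractionalMoment

section PartitionFunction

variable {κ : Type*} [Fintype κ] [DecidableEq κ] {g : ℝ → ℝ}

/-- With `w δ = P {δ}` and `g y = exp (α y - λ + h)` this is
`E_P[exp (∑_{i ∈ s} (α x_i - λ + h) δ_i)]`. -/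
def partitionFunction (w : (κ → Bool) → ℝ) (g : ℝ → ℝ) (s : Finset κ) (x : κ → ℝ) : ℝ :=
  ∑ δ, w δ * ∏ i ∈ s with δ i, g (x i)

lemma partitionFunction_nonneg (hg : ∀ y, 0 ≤ g y) {w : (κ → Bool) → ℝ} (hw : 0 ≤ w)
    (s : Finset κ) (x : κ → ℝ) : 0 ≤ partitionFunction w g s x :=
  Finset.sum_nonneg fun δ _ => mul_nonneg (hw δ) (Finset.prod_nonneg fun i _ => hg (x i))

lemma partitionFunction_mono (hg : ∀ y, 0 ≤ g y) {w w' : (κ → Bool) → ℝ} (hww' : w ≤ w')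
    (s : Finset κ) (x : κ → ℝ) : partitionFunction w g s x ≤ partitionFunction w' g s x :=
  Finset.sum_le_sum fun δ _ =>
    mul_le_mul_of_nonneg_right (hww' δ) (Finset.prod_nonneg fun i _ => hg (x i))

lemma partitionFunction_update_of_notMem (w : (κ → Bool) → ℝ) {s : Finset κ} {a : κ}
    (ha : a ∉ s) (x : κ → ℝ) (y : ℝ) :
    partitionFunction w g s (Function.update x a y) = partitionFunction w g s x := by
  unfold partitionFunction
  refine Finset.sum_congr rfl fun δ _ => congrArg _ <| Finset.prod_congr rfl fun i hi => ?_
  rw [Function.update_of_ne (ne_of_mem_of_not_mem (Finset.mem_of_mem_filter i hi) ha)]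

lemma partitionFunction_insert_update (w : (κ → Bool) → ℝ) {s : Finset κ} {a : κ}
    (ha : a ∉ s) (x : κ → ℝ) (y : ℝ) :
    partitionFunction w g (insert a s) (Function.update x a y) =
      partitionFunction w g s x +
        (g y - 1) * partitionFunction (fun δ => if δ a then w δ else 0) g s x := by
  rw [← partitionFunction_update_of_notMem w ha x y,
    ← partitionFunction_update_of_notMem _ ha x y]
  unfold partitionFunction
  rw [Finset.mul_sum, ← Finset.sum_add_distrib]
  refine Finset.sum_congr rfl fun δ _ => ?_
  rw [Finset.filter_insert]
  by_cases hδ : δ a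
  · rw [if_pos hδ, Finset.prod_insert (fun h => ha (Finset.mem_of_mem_filter a h))]
    simp only [hδ, Function.update_self, if_true]
    ring
  · simp [hδ]

lemma measurable_partitionFunction (hg : Measurable g) (w : (κ → Bool) → ℝ) (s : Finset κ) :
    Measurable (partitionFunction w g s) := by
  unfold partitionFunction
  fun_prop

lemma integral_exp_sum_mul_ite (P : Measure (κ → Bool)) [IsFiniteMeasure P] (f : κ → ℝ) :
    ∫ δ, Real.exp (∑ i, f i * if δ i then 1 else 0) ∂P =
      ∑ δ, P.real {δ} * ∏ i with δ i, Real.exp (f i) := by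
  rw [integral_fintype .of_finite]
  refine Finset.sum_congr rfl fun δ _ => ?_
  rw [smul_eq_mul, Real.exp_sum, Finset.prod_filter]
  congr 1
  refine Finset.prod_congr rfl fun i _ => ?_
  split_ifs <;> simp

end PartitionFunction

lemma lmarginal_mul_const {δ : Type*} {X : δ → Type*} [∀ i, MeasurableSpace (X i)]
    {μ : ∀ i, Measure (X i)} [DecidableEq δ] (s : Finset δ) (f : (∀ i, X i) → ENNReal)
    {c : ENNReal} (hc : c ≠ ⊤) :
    lmarginal μ s (fun x => f x * c) = fun x => lmarginal μ s f x * c := by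
  ext x
  exact lintegral_mul_const' c _ hc

section AnnealedBound

variable {κ : Type*} [Fintype κ] [DecidableEq κ] {μ : Measure ℝ} [IsFiniteMeasure μ]
  {g : ℝ → ℝ} {θ : ℝ}

-- Integrating with `∫⁻` avoids any integrability question for `Z ^ θ` on the product space.
lemma lmarginal_ofReal_rpow_partitionFunction_le (hg : ∀ y, 0 ≤ g y) (hgm : Measurable g)
    (hgi : Integrable g μ) (hθ : θ ∈ Set.Icc (0:ℝ) 1) {w : (κ → Bool) → ℝ} (hw : 0 ≤ w)
    (s : Finset κ) (x : κ → ℝ) :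
    lmarginal (fun _ => μ) s (fun x => ENNReal.ofReal (partitionFunction w g s x ^ θ)) x ≤
      ENNReal.ofReal ((∑ δ, w δ) ^ θ * Real.exp (s.card * fracMomentSup μ g θ)) := by
  set S := fracMomentSup μ g θ
  induction s using Finset.induction_on generalizing x with
  | empty => simp [partitionFunction]
  | @insert a t ha ih =>
    have hstep : ∀ x : κ → ℝ,
        ∫⁻ y, ENNReal.ofReal (partitionFunction w g (insert a t) (Function.update x a y) ^ θ) ∂μ
          ≤ ENNReal.ofReal (partitionFunction w g t x ^ θ) * ENNReal.ofReal (Real.exp S) :=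
      fun x => by
        simp_rw [partitionFunction_insert_update w ha]
        exact lintegral_ofReal_rpow_add_mul_le hg hgi hθ
          (partitionFunction_nonneg hg (fun δ => by split_ifs; exacts [hw δ, le_rfl]) t x)
          (partitionFunction_mono hg (fun δ => by split_ifs; exacts [le_rfl, hw δ]) t x)
    have hmeas : Measurable fun x => ENNReal.ofReal (partitionFunction w g (insert a t) x ^ θ) :=
      ENNReal.measurable_ofReal.comp
        ((measurable_partitionFunction hgm w _).pow_const θ)
    calc lmarginal (fun _ => μ) (insert a t)
          (fun x => ENNReal.ofReal (partitionFunction w g (insert a t) x ^ θ)) x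
        ≤ lmarginal (fun _ => μ) t
          (fun x => ENNReal.ofReal (partitionFunction w g t x ^ θ) *
            ENNReal.ofReal (Real.exp S)) x := by
          rw [lmarginal_insert' _ hmeas ha]
          exact lmarginal_mono hstep x
      _ ≤ ENNReal.ofReal ((∑ δ, w δ) ^ θ * Real.exp (t.card * S)) *
            ENNReal.ofReal (Real.exp S) := by
          rw [lmarginal_mul_const _ _ ENNReal.ofReal_ne_top]
          exact mul_le_mul_left (ih x) _
      _ = ENNReal.ofReal ((∑ δ, w δ) ^ θ * Real.exp ((insert a t).card * S)) := by
          rw [← ENNReal.ofReal_mul (mul_nonneg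
              (Real.rpow_nonneg (Finset.sum_nonneg fun δ _ => hw δ) θ) (Real.exp_nonneg _)),
            Finset.card_insert_of_notMem ha, Nat.cast_succ, add_mul, one_mul, Real.exp_add,
            mul_assoc]

lemma integral_rpow_partitionFunction_le (hg : ∀ y, 0 ≤ g y) (hgm : Measurable g)
    (hgi : Integrable g μ) (hθ : θ ∈ Set.Icc (0:ℝ) 1) {w : (κ → Bool) → ℝ} (hw : 0 ≤ w) :
    ∫ x, partitionFunction w g Finset.univ x ^ θ ∂(Measure.pi fun _ : κ => μ) ≤
      (∑ δ, w δ) ^ θ * Real.exp (Fintype.card κ * fracMomentSup μ g θ) := by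
  have hZθ : ∀ x, 0 ≤ partitionFunction w g Finset.univ x ^ θ := fun x =>
    Real.rpow_nonneg (partitionFunction_nonneg hg hw _ x) θ
  rw [integral_eq_lintegral_of_nonneg_ae (ae_of_all _ hZθ)
    ((measurable_partitionFunction hgm w _).pow_const θ).aestronglyMeasurable]
  refine ENNReal.toReal_le_of_le_ofReal
    (mul_nonneg (Real.rpow_nonneg (Finset.sum_nonneg fun δ _ => hw δ) θ) (Real.exp_nonneg _)) ?_
  rw [lintegral_eq_lmarginal_univ 0, ← Finset.card_univ]
  exact lmarginal_ofReal_rpow_partitionFunction_le hg hgm hgi hθ hw _ 0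

end AnnealedBound

lemma Real.log_le_of_le_exp {x y : ℝ} (hx : 0 ≤ x) (hy : 0 ≤ y) (hxy : x ≤ Real.exp y) :
    Real.log x ≤ y := by
  rcases hx.eq_or_lt with rfl | hx
  · rwa [Real.log_zero]
  · exact (Real.log_le_iff_le_exp hx).2 hxy

theorem fractional_moment_log_partition_le_bernoulli_sup_general
    {ι : Type*} (Λ : Finset ι)
    (μ : Measure ℝ) [IsProbabilityMeasure μ]
    (P : Measure (Λ → Bool)) [IsProbabilityMeasure P]
    (α h θ : ℝ) (hθ0 : 0 < θ) (hθ1 : θ < 1)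
    (hexp : Integrable (fun x => Real.exp (α * x)) μ)
    (lam : ℝ) :
    Real.log (∫ ω, (∫ δ, Real.exp (∑ x : Λ,
          (α * ω x - lam + h) * (if δ x then 1 else 0)) ∂P) ^ θ
        ∂(Measure.pi fun _ : Λ => μ)) ≤
      (Λ.card : ℝ) *
        ⨆ p : Set.Icc (0:ℝ) 1,
          Real.log (∫ x,
            (1 + (p : ℝ) * (Real.exp h * Real.exp (α * x - lam) - 1)) ^ θ ∂μ) := by
  classical
  set g : ℝ → ℝ := fun y => Real.exp h * Real.exp (α * y - lam)
  have hg : ∀ y, 0 ≤ g y := fun y => by positivity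
  have hgi : Integrable g μ := (hexp.const_mul (Real.exp h / Real.exp lam)).congr
    (ae_of_all _ fun y => by simp only [g, Real.exp_sub]; ring)
  have hθ : θ ∈ Set.Icc (0:ℝ) 1 := ⟨hθ0.le, hθ1.le⟩
  have hw : (0 : (Λ → Bool) → ℝ) ≤ fun δ => P.real {δ} := fun δ => measureReal_nonneg
  have hbound := integral_rpow_partitionFunction_le hg (by fun_prop) hgi hθ hw
  rw [sum_measureReal_singleton, Finset.coe_univ, probReal_univ, Real.one_rpow, one_mul,
    Fintype.card_coe] at hbound
  simp_rw [integral_exp_sum_mul_ite, Real.exp_add, mul_comm _ (Real.exp h)]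
  exact Real.log_le_of_le_exp
    (integral_nonneg fun ω => Real.rpow_nonneg (partitionFunction_nonneg hg hw _ ω) θ)
    (mul_nonneg (Nat.cast_nonneg _) (fracMomentSup_nonneg hg hgi hθ)) hbound

/-- Fractional moment version of the annealed-type upper bound. -/
theorem fractional_moment_log_partition_le_bernoulli_sup
    {ι : Type*} (Λ : Finset ι)
    (μ : Measure ℝ) [IsProbabilityMeasure μ]
    (hposω : ∀ᵐ x ∂μ, 0 < x)
    (P : Measure (Λ → Bool)) [IsProbabilityMeasure P]
    (α h θ : ℝ) (hh : 0 < h) (hθ0 : 0 < θ) (hθ1 : θ < 1)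
    (hexp : Integrable (fun x => Real.exp (α * x)) μ)
    (lam : ℝ) (hlam : lam = Real.log (∫ x, Real.exp (α * x) ∂μ)) :
    Real.log (∫ ω, (∫ δ, Real.exp (∑ x : Λ,
          (α * ω x - lam + h) * (if δ x then 1 else 0)) ∂P) ^ θ
        ∂(Measure.pi fun _ : Λ => μ)) ≤
      (Λ.card : ℝ) *
        ⨆ p : Set.Icc (0:ℝ) 1,
          Real.log (∫ x,
            (1 + (p : ℝ) * (Real.exp h * Real.exp (α * x - lam) - 1)) ^ θ ∂μ) :=
  fractional_moment_log_partition_le_bernoulli_sup_general Λ μ P α h θ hθ0 hθ1 hexp lam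
end

section
/- Let ξ be a nonnegative random variable with E[ξ]=1, Var(ξ)>0, and finite third moment. Then there exist constants C > 0 and h_0 > 0 such that for all h ∈ (0, h_0], max_{p∈[0,1]} E[√(1 + p(e^h ξ − 1))] − 1 ≤ C h^2. -/
/-!
Write `Y = e^h ξ - 1` and `σ² = E[(ξ - 1)²]`. For small `p` the cubic bound
`√(1 + u) ≤ 1 + u/2 - u²/8 + |u|³/16` gives `E√(1 + pY) ≤ 1 + p(e^h - 1)/2 - p²σ²/16` as soon as
`p E|Y|³ ≤ σ²`, and the maximum of the right-hand side over `p` is `1 + (e^h - 1)²/σ² = 1 + O(h²)`.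
For `p ≥ δ` no expansion is needed: `G(p) = E√(1 + p(ξ - 1))` is concave with `G(0) = 1`, so it is
at most `G(δ)`, which is `< 1` by strict Jensen since `ξ` is not constant; multiplying `ξ` by `e^h`
multiplies the integrand by at most `e^{h/2}`, and `e^{h/2} G(δ) ≤ 1` for small `h`.
-/

open MeasureTheory Filter Topology Set Real

lemma Real.sqrt_le_one_add_abs (x : ℝ) : √x ≤ 1 + |x| :=
  Real.sqrt_le_iff.2 ⟨by positivity, by nlinarith [abs_nonneg x, le_abs_self x]⟩

lemma Real.sqrt_one_add_le_cubic {u : ℝ} (hu : -1 ≤ u) :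
    √(1 + u) ≤ 1 + u / 2 - u ^ 2 / 8 + |u| ^ 3 / 16 := by
  have hcubic : √(1 + u) ≤ 1 + u / 2 - u ^ 2 / 8 + u ^ 3 / 16 :=
    (Real.sqrt_le_left (by nlinarith [sq_nonneg u, sq_nonneg (u - 1)])).2
      (by nlinarith [sq_nonneg (u ^ 2 * (u - 2)), sq_nonneg u, sq_nonneg (u ^ 2)])
  have : u ^ 3 ≤ |u| ^ 3 := by rw [← abs_pow]; exact le_abs_self _
  linarith

lemma abs_mul_sub_one_pow_three_le {c : ℝ} (hc1 : 1 ≤ c) (hc3 : c ≤ 3) (x : ℝ) :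
    |c * x - 1| ^ 3 ≤ 108 * (|x - 1| ^ 3 + 1) := by
  have hle : |c * x - 1| ≤ 3 * (|x - 1| + 1) :=
    calc |c * x - 1| = |c * (x - 1) + (c - 1)| := by ring_nf
      _ ≤ c * |x - 1| + (c - 1) := by
        grw [abs_add_le, abs_mul, abs_of_nonneg (by linarith : 0 ≤ c),
          abs_of_nonneg (by linarith : 0 ≤ c - 1)]
      _ ≤ 3 * (|x - 1| + 1) := by nlinarith [abs_nonneg (x - 1)]
  have ha := abs_nonneg (x - 1)
  calc |c * x - 1| ^ 3 ≤ (3 * (|x - 1| + 1)) ^ 3 := by gcongr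
    _ ≤ 108 * (|x - 1| ^ 3 + 1) := by nlinarith [mul_nonneg (sq_nonneg (|x - 1| - 1)) ha]

-- The cubic term is absorbed by half of the quadratic one; then `p a / 2 ≤ p² s / 16 + a² / s`.
lemma cubic_le_sq_div_of_mul_le {a p s B G K : ℝ} (hs : 0 < s) (hp : 0 ≤ p) (hB : s ≤ B)
    (hG : G ≤ K) (hpK : p * K ≤ s) : p / 2 * a - p ^ 2 / 8 * B + p ^ 3 / 16 * G ≤ a ^ 2 / s := by
  have hG' : p ^ 3 * G ≤ p ^ 2 * s := by
    calc p ^ 3 * G ≤ p ^ 2 * (p * K) := by nlinarith [pow_nonneg hp 3]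
      _ ≤ p ^ 2 * s := by gcongr
  have hB' : p ^ 2 * s ≤ p ^ 2 * B := by gcongr
  rw [le_div_iff₀ hs]
  nlinarith [sq_nonneg (p * s - 4 * a)]

lemma Real.exp_sub_one_le_two_mul {h : ℝ} (h0 : 0 ≤ h) (h1 : h ≤ 1) : exp h - 1 ≤ 2 * h := by
  simpa [abs_of_nonneg h0, abs_of_nonneg (sub_nonneg.2 (one_le_exp h0))]
    using abs_exp_sub_one_le (x := h) (by rwa [abs_of_nonneg h0])

lemma exists_forall_sqrt_exp_mul_le_one {a : ℝ} (ha0 : 0 ≤ a) (ha : a < 1) :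
    ∃ h₀ > 0, ∀ h ≤ h₀, √(exp h) * a ≤ 1 := by
  have hlim : Tendsto (fun h => √(exp h) * a) (𝓝 0) (𝓝 a) := by
    simpa using (by fun_prop : Continuous fun h => √(exp h) * a).tendsto 0
  obtain ⟨h₀, hh₀a, hh₀⟩ :=
    ((hlim.eventually_le_const ha).filter_mono nhdsWithin_le_nhds |>.and
      (self_mem_nhdsWithin : Ioi (0 : ℝ) ∈ 𝓝[>] 0)).exists
  exact ⟨h₀, hh₀, fun h hh => le_trans (by gcongr) hh₀a⟩

noncomputable def sqrtFunctional {Ω : Type*} [MeasurableSpace Ω] (μ : Measure Ω) (ξ : Ω → ℝ)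
    (p : ℝ) : ℝ :=
  ∫ ω, √(1 + p * (ξ ω - 1)) ∂μ

section

variable {Ω : Type*} [MeasurableSpace Ω] {μ : Measure Ω} {ξ : Ω → ℝ}

lemma sqrtFunctional_nonneg (p : ℝ) : 0 ≤ sqrtFunctional μ ξ p :=
  integral_nonneg fun _ => Real.sqrt_nonneg _

theorem MeasureTheory.Integrable.sqrt [IsFiniteMeasure μ] {f : Ω → ℝ} (hf : Integrable f μ) :
    Integrable (fun ω => √(f ω)) μ := by
  refine ((integrable_const 1).add hf.abs).mono'
    (Real.continuous_sqrt.comp_aestronglyMeasurable hf.1) (ae_of_all _ fun ω => ?_)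
  rw [Real.norm_of_nonneg (Real.sqrt_nonneg _)]
  exact Real.sqrt_le_one_add_abs _

lemma integrable_sqrt_one_add_mul [IsFiniteMeasure μ] (hint : Integrable ξ μ) (p : ℝ) :
    Integrable (fun ω => √(1 + p * (ξ ω - 1))) μ :=
  ((integrable_const 1).add ((hint.sub (integrable_const 1)).const_mul p)).sqrt

lemma sqrtFunctional_const_mul_le [IsFiniteMeasure μ] (hint : Integrable ξ μ) {c p : ℝ}
    (hc : 1 ≤ c) (hp : p ≤ 1) :
    sqrtFunctional μ (fun ω => c * ξ ω) p ≤ √c * sqrtFunctional μ ξ p := by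
  rw [sqrtFunctional, sqrtFunctional, ← integral_const_mul]
  refine integral_mono_of_nonneg (ae_of_all _ fun ω => Real.sqrt_nonneg _)
    ((integrable_sqrt_one_add_mul hint p).const_mul _) (ae_of_all _ fun ω => ?_)
  dsimp only
  rw [← Real.sqrt_mul (by linarith)]
  exact Real.sqrt_le_sqrt (by nlinarith)

variable [IsProbabilityMeasure μ]

lemma sqrtFunctional_le_cubic (hpos : ∀ᵐ ω ∂μ, 0 ≤ ξ ω) (hint : Integrable ξ μ)
    (h2 : Integrable (fun ω => (ξ ω - 1) ^ 2) μ) (h3 : Integrable (fun ω => |ξ ω - 1| ^ 3) μ)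
    {p : ℝ} (hp0 : 0 ≤ p) (hp1 : p ≤ 1) :
    sqrtFunctional μ ξ p ≤ 1 + p / 2 * ∫ ω, (ξ ω - 1) ∂μ - p ^ 2 / 8 * ∫ ω, (ξ ω - 1) ^ 2 ∂μ
      + p ^ 3 / 16 * ∫ ω, |ξ ω - 1| ^ 3 ∂μ := by
  have h1 : Integrable (fun ω => ξ ω - 1) μ := hint.sub (integrable_const 1)
  calc sqrtFunctional μ ξ p
      ≤ ∫ ω, (1 + p / 2 * (ξ ω - 1) - p ^ 2 / 8 * (ξ ω - 1) ^ 2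
          + p ^ 3 / 16 * |ξ ω - 1| ^ 3) ∂μ := by
        refine integral_mono_ae (integrable_sqrt_one_add_mul hint p)
          ((((integrable_const 1).add (h1.const_mul _)).sub (h2.const_mul _)).add
            (h3.const_mul _)) ?_
        filter_upwards [hpos] with ω hω
        refine (Real.sqrt_one_add_le_cubic (u := p * (ξ ω - 1)) (by nlinarith)).trans_eq ?_
        rw [abs_mul, abs_of_nonneg hp0]
        ring
    _ = _ := by
        rw [integral_add, integral_sub, integral_add, integral_const_mul, integral_const_mul,
          integral_const_mul, integral_const]
        · simp
        all_goals fun_prop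

lemma sqrtFunctional_lt_one (hpos : ∀ᵐ ω ∂μ, 0 ≤ ξ ω) (hint : Integrable ξ μ)
    (hmean : ∫ ω, ξ ω ∂μ = 1) (hne : ¬ ξ =ᵐ[μ] 1) {p : ℝ} (hp0 : 0 < p) (hp1 : p ≤ 1) :
    sqrtFunctional μ ξ p < 1 := by
  have hX : Integrable (fun ω => ξ ω - 1) μ := hint.sub (integrable_const 1)
  let f : Ω → ℝ := fun ω => 1 + p * (ξ ω - 1)
  have hf_int : Integrable f μ := (integrable_const 1).add (hX.const_mul p)
  have hf_avg : ⨍ ω, f ω ∂μ = 1 := by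
    rw [average_eq_integral, integral_add (integrable_const 1) (hX.const_mul p),
      integral_const_mul, integral_sub hint (integrable_const 1), hmean]
    simp
  have hf_nonneg : ∀ᵐ ω ∂μ, f ω ∈ Ici 0 := by
    filter_upwards [hpos] with ω hω
    exact mem_Ici.2 (by nlinarith)
  rcases Real.strictConcaveOn_sqrt.ae_eq_const_or_lt_map_average
      Real.continuous_sqrt.continuousOn isClosed_Ici hf_nonneg hf_int hf_int.sqrt with hconst | hlt
  · refine absurd ?_ hne
    filter_upwards [hconst] with ω hω
    rw [hf_avg] at hω
    have : p * (ξ ω - 1) = 0 := by simpa [f] using hω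
    simpa [hp0.ne', sub_eq_zero] using this
  · rw [sqrtFunctional]
    simpa [hf_avg, average_eq_integral] using hlt

lemma sqrtFunctional_le_of_le (hpos : ∀ᵐ ω ∂μ, 0 ≤ ξ ω) (hint : Integrable ξ μ) {q p : ℝ}
    (hq : 0 < q) (hqp : q ≤ p) (hp1 : p ≤ 1) (hq1 : sqrtFunctional μ ξ q ≤ 1) :
    sqrtFunctional μ ξ p ≤ sqrtFunctional μ ξ q := by
  have hp : 0 < p := hq.trans_le hqp
  set t := q / p
  have ht0 : 0 ≤ t := by positivity
  have ht1 : t ≤ 1 := div_le_one_of_le₀ hqp hp.le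
  have htp : t * p = q := div_mul_cancel₀ q hp.ne'
  have hIp := (integrable_sqrt_one_add_mul hint p).const_mul t
  have hcomb : 1 - t + t * sqrtFunctional μ ξ p ≤ sqrtFunctional μ ξ q :=
    calc 1 - t + t * sqrtFunctional μ ξ p = ∫ ω, (1 - t + t * √(1 + p * (ξ ω - 1))) ∂μ := by
          rw [integral_add (integrable_const _) hIp, integral_const_mul]
          simp [sqrtFunctional]
      _ ≤ sqrtFunctional μ ξ q := by
          refine integral_mono_ae ((integrable_const _).add hIp)
            (integrable_sqrt_one_add_mul hint q) ?_
          filter_upwards [hpos] with ω hω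
          have hconc := Real.strictConcaveOn_sqrt.concaveOn.2 (mem_Ici.2 zero_le_one)
            (mem_Ici.2 (by nlinarith : 0 ≤ 1 + p * (ξ ω - 1))) (by linarith : 0 ≤ 1 - t) ht0
            (by ring)
          simp only [smul_eq_mul, Real.sqrt_one, mul_one] at hconc
          refine hconc.trans_eq ?_
          rw [← htp]
          ring_nf
  nlinarith

lemma sqrtFunctional_mul_le_one (hpos : ∀ᵐ ω ∂μ, 0 ≤ ξ ω) (hint : Integrable ξ μ)
    {q p c : ℝ} (hq : 0 < q) (hqp : q ≤ p) (hp1 : p ≤ 1) (hc : 1 ≤ c)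
    (hcq : √c * sqrtFunctional μ ξ q ≤ 1) :
    sqrtFunctional μ (fun ω => c * ξ ω) p ≤ 1 := by
  have hq1 : sqrtFunctional μ ξ q ≤ 1 :=
    le_trans (le_mul_of_one_le_left (sqrtFunctional_nonneg _)
      (Real.one_le_sqrt.2 hc)) hcq
  calc sqrtFunctional μ (fun ω => c * ξ ω) p ≤ √c * sqrtFunctional μ ξ p :=
        sqrtFunctional_const_mul_le hint hc hp1
    _ ≤ √c * sqrtFunctional μ ξ q := by
        gcongr
        exact sqrtFunctional_le_of_le hpos hint hq hqp hp1 hq1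
    _ ≤ 1 := hcq

lemma integral_mul_sub_one (hint : Integrable ξ μ) (hmean : ∫ ω, ξ ω ∂μ = 1) (c : ℝ) :
    ∫ ω, (c * ξ ω - 1) ∂μ = c - 1 := by
  rw [integral_sub (hint.const_mul c) (integrable_const 1), integral_const_mul, hmean]
  simp

lemma mul_sub_one_sq_eq (c x : ℝ) :
    (c * x - 1) ^ 2 = c ^ 2 * (x - 1) ^ 2 + 2 * c * (c - 1) * (x - 1) + (c - 1) ^ 2 := by
  ring

lemma integrable_mul_sub_one_sq (hint : Integrable ξ μ)
    (h2 : Integrable (fun ω => (ξ ω - 1) ^ 2) μ) (c : ℝ) :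
    Integrable (fun ω => (c * ξ ω - 1) ^ 2) μ := by
  simp_rw [mul_sub_one_sq_eq]
  exact ((h2.const_mul _).add ((hint.sub (integrable_const 1)).const_mul _)).add
    (integrable_const _)

lemma integral_mul_sub_one_sq (hint : Integrable ξ μ) (hmean : ∫ ω, ξ ω ∂μ = 1)
    (h2 : Integrable (fun ω => (ξ ω - 1) ^ 2) μ) (c : ℝ) :
    ∫ ω, (c * ξ ω - 1) ^ 2 ∂μ = c ^ 2 * ∫ ω, (ξ ω - 1) ^ 2 ∂μ + (c - 1) ^ 2 := by
  have hX : Integrable (fun ω => ξ ω - 1) μ := hint.sub (integrable_const 1)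
  have hX0 : ∫ ω, (ξ ω - 1) ∂μ = 0 := by simpa using integral_mul_sub_one hint hmean 1
  simp_rw [mul_sub_one_sq_eq]
  rw [integral_add, integral_add, integral_const_mul, integral_const_mul, hX0]
  · simp
  all_goals fun_prop

lemma integrable_abs_mul_sub_one_pow_three (hint : Integrable ξ μ)
    (h3 : Integrable (fun ω => |ξ ω - 1| ^ 3) μ) {c : ℝ} (hc1 : 1 ≤ c) (hc3 : c ≤ 3) :
    Integrable (fun ω => |c * ξ ω - 1| ^ 3) μ :=
  (((h3.add (integrable_const 1)).const_mul 108)).mono'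
    ((by fun_prop : Continuous fun x : ℝ => |c * x - 1| ^ 3).comp_aestronglyMeasurable hint.1)
    (ae_of_all _ fun ω => by
      rw [Real.norm_of_nonneg (by positivity)]
      exact abs_mul_sub_one_pow_three_le hc1 hc3 (ξ ω))

lemma integral_abs_mul_sub_one_pow_three_le (hint : Integrable ξ μ)
    (h3 : Integrable (fun ω => |ξ ω - 1| ^ 3) μ) {c : ℝ} (hc1 : 1 ≤ c) (hc3 : c ≤ 3) :
    ∫ ω, |c * ξ ω - 1| ^ 3 ∂μ ≤ 108 * (∫ ω, |ξ ω - 1| ^ 3 ∂μ + 1) := by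
  calc ∫ ω, |c * ξ ω - 1| ^ 3 ∂μ ≤ ∫ ω, 108 * (|ξ ω - 1| ^ 3 + 1) ∂μ :=
        integral_mono (integrable_abs_mul_sub_one_pow_three hint h3 hc1 hc3)
          ((h3.add (integrable_const 1)).const_mul 108)
          fun ω => abs_mul_sub_one_pow_three_le hc1 hc3 (ξ ω)
    _ = 108 * (∫ ω, |ξ ω - 1| ^ 3 ∂μ + 1) := by
        rw [integral_const_mul, integral_add h3 (integrable_const 1)]
        simp

lemma sqrtFunctional_mul_le_one_add_sq_div (hpos : ∀ᵐ ω ∂μ, 0 ≤ ξ ω) (hint : Integrable ξ μ)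
    (hmean : ∫ ω, ξ ω ∂μ = 1) (h2 : Integrable (fun ω => (ξ ω - 1) ^ 2) μ)
    (h3 : Integrable (fun ω => |ξ ω - 1| ^ 3) μ) (hvar : 0 < ∫ ω, (ξ ω - 1) ^ 2 ∂μ)
    {c p : ℝ} (hc1 : 1 ≤ c) (hc3 : c ≤ 3) (hp0 : 0 ≤ p) (hp1 : p ≤ 1)
    (hpK : p * (108 * (∫ ω, |ξ ω - 1| ^ 3 ∂μ + 1)) ≤ ∫ ω, (ξ ω - 1) ^ 2 ∂μ) :
    sqrtFunctional μ (fun ω => c * ξ ω) p ≤ 1 + (c - 1) ^ 2 / ∫ ω, (ξ ω - 1) ^ 2 ∂μ := by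
  have hcpos : ∀ᵐ ω ∂μ, 0 ≤ c * ξ ω := by
    filter_upwards [hpos] with ω hω
    positivity
  refine (sqrtFunctional_le_cubic hcpos (hint.const_mul c) (integrable_mul_sub_one_sq hint h2 c)
    (integrable_abs_mul_sub_one_pow_three hint h3 hc1 hc3) hp0 hp1).trans ?_
  rw [integral_mul_sub_one hint hmean, integral_mul_sub_one_sq hint hmean h2]
  have hB : ∫ ω, (ξ ω - 1) ^ 2 ∂μ ≤ c ^ 2 * ∫ ω, (ξ ω - 1) ^ 2 ∂μ + (c - 1) ^ 2 := by
    nlinarith [sq_nonneg (c - 1)]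
  linarith [cubic_le_sq_div_of_mul_le (a := c - 1) hvar hp0 hB
    (integral_abs_mul_sub_one_pow_three_le hint h3 hc1 hc3) hpK]

end

theorem sqrt_functional_max_le_quadratic_general
    {Ω : Type*} [MeasurableSpace Ω] (μ : Measure Ω) [IsProbabilityMeasure μ]
    (ξ : Ω → ℝ)
    (hpos : ∀ᵐ ω ∂μ, 0 ≤ ξ ω)
    (hint : Integrable ξ μ) (hmean : ∫ ω, ξ ω ∂μ = 1)
    (h2 : Integrable (fun ω => (ξ ω - 1)^2) μ)
    (h3 : Integrable (fun ω => |ξ ω - 1|^3) μ)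
    (hvar : 0 < ∫ ω, (ξ ω - 1)^2 ∂μ) :
    ∃ C h₀ : ℝ, 0 < C ∧ 0 < h₀ ∧ ∀ h : ℝ, 0 < h → h ≤ h₀ →
      (⨆ p : Set.Icc (0:ℝ) 1,
          ∫ ω, Real.sqrt (1 + (p : ℝ) * (Real.exp h * ξ ω - 1)) ∂μ) - 1 ≤ C * h^2 := by
  set σ2 := ∫ ω, (ξ ω - 1) ^ 2 ∂μ
  set K := 108 * (∫ ω, |ξ ω - 1| ^ 3 ∂μ + 1)
  have hK : 0 < K := by positivity
  set δ := min 1 (σ2 / K)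
  have hδ0 : 0 < δ := lt_min one_pos (div_pos hvar hK)
  have hδK : δ * K ≤ σ2 := (le_div_iff₀ hK).1 (min_le_right _ _)
  have hne : ¬ ξ =ᵐ[μ] 1 := fun h =>
    hvar.ne' (integral_eq_zero_of_ae (h.mono fun ω hω => by simp [hω]))
  obtain ⟨h₀, hh₀, hh₀δ⟩ := exists_forall_sqrt_exp_mul_le_one (sqrtFunctional_nonneg _)
    (sqrtFunctional_lt_one hpos hint hmean hne hδ0 (min_le_left _ _))
  refine ⟨4 / σ2, min h₀ 1, by positivity, lt_min hh₀ one_pos, fun h hh hhh₀ => ?_⟩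
  refine sub_le_iff_le_add'.2 (ciSup_le fun ⟨p, hp0, hp1⟩ => ?_)
  have hh1 : h ≤ 1 := hhh₀.trans (min_le_right _ _)
  have hexp1 : 1 ≤ exp h := one_le_exp hh.le
  have hexp2 : exp h - 1 ≤ 2 * h := exp_sub_one_le_two_mul hh.le hh1
  rcases le_total p δ with hpδ | hδp
  · calc sqrtFunctional μ (fun ω => exp h * ξ ω) p ≤ 1 + (exp h - 1) ^ 2 / σ2 :=
          sqrtFunctional_mul_le_one_add_sq_div hpos hint hmean h2 h3 hvar hexp1 (by linarith)
            hp0 hp1 ((mul_le_mul_of_nonneg_right hpδ hK.le).trans hδK)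
      _ ≤ 1 + 4 / σ2 * h ^ 2 := by
          rw [div_mul_eq_mul_div]
          gcongr
          nlinarith
  · calc sqrtFunctional μ (fun ω => exp h * ξ ω) p ≤ 1 :=
          sqrtFunctional_mul_le_one hpos hint hδ0 hδp hp1 hexp1
            (hh₀δ h (hhh₀.trans (min_le_left _ _)))
      _ ≤ 1 + 4 / σ2 * h ^ 2 := le_add_of_nonneg_right (by positivity)

/-- The maximum over `p ∈ [0,1]` of `E[√(1 + p(e^h ξ − 1))] − 1` is `O(h²)`. -/
theorem sqrt_functional_max_le_quadratic
    {Ω : Type*} [MeasurableSpace Ω] (μ : Measure Ω) [IsProbabilityMeasure μ]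
    (ξ : Ω → ℝ) (hmeas : Measurable ξ)
    (hpos : ∀ᵐ ω ∂μ, 0 ≤ ξ ω)
    (hint : Integrable ξ μ) (hmean : ∫ ω, ξ ω ∂μ = 1)
    (h2 : Integrable (fun ω => (ξ ω - 1)^2) μ)
    (h3 : Integrable (fun ω => |ξ ω - 1|^3) μ)
    (hvar : 0 < ∫ ω, (ξ ω - 1)^2 ∂μ) :
    ∃ C h₀ : ℝ, 0 < C ∧ 0 < h₀ ∧ ∀ h : ℝ, 0 < h → h ≤ h₀ →
      (⨆ p : Set.Icc (0:ℝ) 1,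
          ∫ ω, Real.sqrt (1 + (p : ℝ) * (Real.exp h * ξ ω - 1)) ∂μ) - 1 ≤ C * h^2 :=
  sqrt_functional_max_le_quadratic_general μ ξ hpos hint hmean h2 h3 hvar
end

section
/- Fix θ₁ > 0 and β > 0, and for h > 0 define G_β(α,h) := max_{n≥0} [ θ₁ e^{−4βn} h − (1/2) θ₁² e^{−8βn} V ], where V > 0 is a fixed constant. Then there exist constants c, C > 0 (depending on θ₁, β, V) such that for all h ∈ (0,1], c·h² ≤ G_β(α,h) ≤ C·h². -/
lemma G_beta_aux (x h V m : ℝ) (hV : 0 < V) (hh : 0 < h) (hm : 0 ≤ m)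
    (h1 : x ≤ h / V) (h2 : m * h ≤ x) :
    m / 2 * h ^ 2 ≤ x * h - (1/2) * x ^ 2 * V := by
  have hx0 : 0 ≤ x := le_trans (by positivity) h2
  have hxV : x * V ≤ h := by
    rw [le_div_iff₀ hV] at h1; exact h1
  nlinarith [mul_nonneg hx0 (sub_nonneg.2 hxV), mul_le_mul_of_nonneg_right h2 hh.le]

/-- The piecewise-affine free-energy asymptotic `G_β(α,h)` is comparable to `h²`. -/
theorem G_beta_quadratic_bounds (θ₁ β V : ℝ) (hθ : 0 < θ₁) (hβ : 0 < β) (hV : 0 < V) :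
    ∃ c C : ℝ, 0 < c ∧ 0 < C ∧ ∀ h ∈ Set.Ioc (0:ℝ) 1,
      c * h^2 ≤
          (⨆ n : ℕ, (θ₁ * Real.exp (-(4 * β * n)) * h
            - (1/2) * θ₁^2 * Real.exp (-(8 * β * n)) * V)) ∧
        (⨆ n : ℕ, (θ₁ * Real.exp (-(4 * β * n)) * h
            - (1/2) * θ₁^2 * Real.exp (-(8 * β * n)) * V)) ≤ C * h^2 := by
  have hexp : 0 < Real.exp (-(4*β)) := Real.exp_pos _
  refine ⟨min θ₁ (Real.exp (-(4*β))/V) / 2, 1/(2*V), by positivity, by positivity, ?_⟩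
  intro h hh
  obtain ⟨hh0, hh1⟩ := hh
  have hsq : ∀ n : ℕ, Real.exp (-(8 * β * n)) = Real.exp (-(4 * β * n))^2 := by
    intro n; rw [sq, ← Real.exp_add]; ring_nf
  have key : ∀ n : ℕ, θ₁ * Real.exp (-(4 * β * n)) * h
      - (1/2) * θ₁^2 * Real.exp (-(8 * β * n)) * V ≤ 1/(2*V) * h^2 := by
    intro n
    rw [hsq n]
    set x := θ₁ * Real.exp (-(4 * β * n)) with hxdef
    have heq : θ₁ * Real.exp (-(4 * β * n)) * h - 1/2 * θ₁^2 * Real.exp (-(4 * β * n))^2 * V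
        = x * h - 1/2 * x^2 * V := by rw [hxdef]; ring
    rw [heq]
    have hV' : (0:ℝ) < 2*V := by positivity
    have hrw : 1/(2*V) * h^2 = h^2 / (2*V) := by ring
    rw [hrw, le_div_iff₀ hV']
    nlinarith [sq_nonneg (V*x - h)]
  have hbdd : BddAbove (Set.range fun n : ℕ => θ₁ * Real.exp (-(4 * β * n)) * h
      - (1/2) * θ₁^2 * Real.exp (-(8 * β * n)) * V) := by
    refine ⟨1/(2*V) * h^2, ?_⟩
    rintro _ ⟨n, rfl⟩; exact key n
  constructor
  · set t := Real.log (θ₁ * V / h) / (4*β) with htdef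
    set n : ℕ := ⌈t⌉₊ with hndef
    have hle : t ≤ (n:ℝ) := Nat.le_ceil t
    have hratio : 0 < θ₁ * V / h := by positivity
    have h4β : (4:ℝ)*β ≠ 0 := by positivity
    have hexpT : Real.exp (-(4*β*t)) = h / (θ₁ * V) := by
      rw [htdef, show -(4*β*(Real.log (θ₁ * V / h) / (4*β))) = -Real.log (θ₁*V/h) by
        field_simp, Real.exp_neg, Real.exp_log hratio]
      rw [inv_div]
    have hx_le : θ₁ * Real.exp (-(4 * β * n)) ≤ h / V := by
      have h1 : -(4 * β * (n:ℝ)) ≤ -(4*β*t) := by nlinarith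
      calc θ₁ * Real.exp (-(4 * β * n)) ≤ θ₁ * Real.exp (-(4*β*t)) :=
            mul_le_mul_of_nonneg_left (Real.exp_le_exp.2 h1) hθ.le
        _ = h / V := by rw [hexpT]; field_simp
    have hx_ge : min θ₁ (Real.exp (-(4*β))/V) * h ≤ θ₁ * Real.exp (-(4 * β * n)) := by
      rcases le_or_gt t 0 with ht | ht
      · have hn0 : n = 0 := by rw [hndef]; exact Nat.ceil_eq_zero.mpr ht
        rw [hn0]
        simp only [Nat.cast_zero, mul_zero, neg_zero, Real.exp_zero, mul_one]
        calc min θ₁ (Real.exp (-(4*β))/V) * h ≤ θ₁ * h :=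
              mul_le_mul_of_nonneg_right (min_le_left _ _) hh0.le
          _ ≤ θ₁ * 1 := mul_le_mul_of_nonneg_left hh1 hθ.le
          _ = θ₁ := mul_one _
      · have hn1 : (n:ℝ) < t + 1 := Nat.ceil_lt_add_one ht.le
        have hmono : Real.exp (-(4*β*(t+1))) ≤ Real.exp (-(4 * β * n)) := by
          apply Real.exp_le_exp.2; nlinarith
        calc min θ₁ (Real.exp (-(4*β))/V) * h ≤ (Real.exp (-(4*β))/V) * h :=
              mul_le_mul_of_nonneg_right (min_le_right _ _) hh0.le
          _ = θ₁ * Real.exp (-(4*β*(t+1))) := by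
              rw [show (-(4*β*(t+1))) = -(4*β*t) + -(4*β) by ring, Real.exp_add, hexpT]
              field_simp
          _ ≤ θ₁ * Real.exp (-(4 * β * n)) := mul_le_mul_of_nonneg_left hmono hθ.le
    have hfn : min θ₁ (Real.exp (-(4*β))/V) / 2 * h^2 ≤
        θ₁ * Real.exp (-(4 * β * n)) * h - (1/2) * θ₁^2 * Real.exp (-(8 * β * n)) * V := by
      rw [hsq n]
      set x := θ₁ * Real.exp (-(4 * β * n)) with hxdef
      have heq : θ₁ * Real.exp (-(4 * β * n)) * h - 1/2 * θ₁^2 * Real.exp (-(4 * β * n))^2 * V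
          = x * h - 1/2 * x^2 * V := by rw [hxdef]; ring
      rw [heq]
      exact G_beta_aux x h V _ hV hh0 (le_min hθ.le (by positivity)) hx_le hx_ge
    exact hfn.trans (le_ciSup hbdd n)
  · exact ciSup_le key
end
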